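/- arXiv:2506.04582 — 8 statements merged into one kernel-verified Lean document; each statement's English description precedes it below -/
import Mathlib

section
/- Let d ≥ 1 and n ≥ 1 be integers, let v ∈ ℤ^d have every entry coprime to n, and let δ ∈ ℤ^d. Then L(n,v,δ) is an n-point Latin hypercube design in [0,1]^d: it has exactly n elements, and for every coordinate k ∈ {1,…,d} the map sending a point of L(n,v,δ) to its k-th coordinate is a bijection from L(n,v,δ) onto {1/(2n), 3/(2n), …, (2n−1)/(2n)}. -/
/-!
Modulo `ℤ^d` the lattice points are indexed by `i ∈ ℤ/n`, and the `k`-th coordinate of the point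
of index `i` is, modulo `1`, the cell centre `(2r + 1)/(2n)` with `r = i v_k + δ_k mod n`. Cell
centres lie in `(0, 1)`, so each class meets `[0,1]^d` in exactly one point. As `v_k` is a unit
mod `n`, `i ↦ i v_k + δ_k` permutes `ℤ/n`; hence each coordinate projection is a bijection onto
the `n` cell centres, and in particular the design has `n` points.
-/

open Finset

/-- Distance from a real number to the nearest integer: w(t) = min over z in ZZ of |t - z|. -/
noncomputable def nid (t : ℝ) : ℝ := ⨅ z : ℤ, |t - (z : ℝ)|

/-- Wrap-around distance on ℝ^d. -/
noncomputable def wdist {d : ℕ} (u : Fin d → ℝ) : ℝ := Real.sqrt (∑ k, nid (u k) ^ 2)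

/-- Lattice-based Latin hypercube design
L(n,v,δ) = { z + i·v/n + δ/n + 1_d/(2n) : z ∈ ℤ^d, i ∈ ℤ } ∩ [0,1]^d. -/
def LHDset (d n : ℕ) (v : Fin d → ℤ) (δ : Fin d → ℝ) : Set (Fin d → ℝ) :=
  {x | (∃ (z : Fin d → ℤ) (i : ℤ),
          x = fun k => (z k : ℝ) + (i : ℝ) * (v k : ℝ) / n + δ k / n + 1 / (2 * n)) ∧
       ∀ k, x k ∈ Set.Icc (0 : ℝ) 1}

noncomputable def cellCenter (n : ℕ) (m : ℤ) : ℝ := (2 * m + 1) / (2 * n)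

lemma cellCenter_injective {n : ℕ} (hn : n ≠ 0) : Function.Injective (cellCenter n) := by
  intro a b h
  have hn' : (n : ℝ) ≠ 0 := by exact_mod_cast hn
  unfold cellCenter at h
  rw [div_left_inj' (by positivity)] at h
  exact_mod_cast (by linarith : (a : ℝ) = b)

lemma cellCenter_mem_Icc_iff {n : ℕ} (hn : n ≠ 0) {m : ℤ} :
    cellCenter n m ∈ Set.Icc (0 : ℝ) 1 ↔ 0 ≤ m ∧ m < n := by
  have hpos : (0 : ℝ) < 2 * n := by positivity
  rw [Set.mem_Icc, cellCenter, le_div_iff₀ hpos, zero_mul, div_le_one hpos]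
  have hcast : (0 : ℝ) ≤ 2 * m + 1 ∧ (2 * m + 1 : ℝ) ≤ 2 * n ↔
      (0 : ℤ) ≤ 2 * m + 1 ∧ 2 * m + 1 ≤ 2 * (n : ℤ) := by
    norm_cast
  rw [hcast]
  omega

lemma cellCenter_val_intCast {n : ℕ} [NeZero n] {m : ℤ} (h : cellCenter n m ∈ Set.Icc (0 : ℝ) 1) :
    cellCenter n (m : ZMod n).val = cellCenter n m := by
  obtain ⟨h0, h1⟩ := (cellCenter_mem_Icc_iff (NeZero.ne n)).mp h
  rw [ZMod.val_intCast, Int.emod_eq_of_lt h0 h1]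

lemma lattice_coord_eq_cellCenter {n : ℕ} (hn : n ≠ 0) (z i v δ : ℤ) :
    (z : ℝ) + i * v / n + δ / n + 1 / (2 * n) = cellCenter n (n * z + i * v + δ) := by
  have : (n : ℝ) ≠ 0 := by exact_mod_cast hn
  rw [cellCenter]
  push_cast
  field_simp

section

variable {d : ℕ} (n : ℕ) [NeZero n] (v δ : Fin d → ℤ)

noncomputable def lhdPoint (i : ZMod n) : Fin d → ℝ :=
  fun k => cellCenter n (i * v k + δ k : ZMod n).val

lemma LHDset_eq_range : LHDset d n v (fun k => (δ k : ℝ)) = Set.range (lhdPoint n v δ) := by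
  have hn := NeZero.ne n
  ext x
  constructor
  · rintro ⟨⟨z, i, rfl⟩, hx⟩
    refine ⟨(i : ZMod n), funext fun k => ?_⟩
    have hxk := hx k
    simp only [lattice_coord_eq_cellCenter hn] at hxk ⊢
    rw [lhdPoint, ← cellCenter_val_intCast hxk]
    simp
  · rintro ⟨i, rfl⟩
    refine ⟨⟨fun k => -((i.val * v k + δ k) / n), i.val, funext fun k => ?_⟩, fun k => ?_⟩
    · rw [lattice_coord_eq_cellCenter hn, lhdPoint]
      congr 1
      have := ZMod.val_intCast (n := n) (i.val * v k + δ k)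
      push_cast [ZMod.natCast_zmod_val] at this
      rw [this, Int.emod_def]
      ring
    · rw [lhdPoint, cellCenter_mem_Icc_iff hn]
      exact ⟨by positivity, by exact_mod_cast ZMod.val_lt _⟩

variable {v} {k : Fin d}

lemma lhdPoint_apply_injective (hco : IsCoprime (v k) n) :
    Function.Injective (fun i : ZMod n => lhdPoint n v δ i k) := by
  intro i j h
  have hval := Nat.cast_injective (cellCenter_injective (NeZero.ne n) h)
  have := add_right_cancel (ZMod.val_injective n hval)
  exact (ZMod.unitOfIsCoprime _ hco).isUnit.mul_right_cancel this

lemma range_lhdPoint_apply (hco : IsCoprime (v k) n) :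
    Set.range (fun i : ZMod n => lhdPoint n v δ i k) =
      {t : ℝ | ∃ j : ℕ, j < n ∧ t = (2 * (j : ℝ) + 1) / (2 * n)} := by
  ext t
  constructor
  · rintro ⟨i, rfl⟩
    exact ⟨(i * v k + δ k : ZMod n).val, ZMod.val_lt _, by simp [lhdPoint, cellCenter]⟩
  · rintro ⟨j, hj, rfl⟩
    set u := ZMod.unitOfIsCoprime _ hco
    refine ⟨(j - δ k) * ↑u⁻¹, ?_⟩
    have hres : ((j - δ k) * ↑u⁻¹ * v k + δ k : ZMod n) = j := by
      rw [mul_assoc, ← ZMod.coe_unitOfIsCoprime _ hco, Units.inv_mul, mul_one, sub_add_cancel]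
    simp [lhdPoint, hres, ZMod.val_natCast_of_lt hj, cellCenter]

end

/-- L(n,v,δ) is an n-point Latin hypercube design in [0,1]^d. -/
theorem stmt_0 (d n : ℕ) (hd : 1 ≤ d) (hn : 1 ≤ n) (v δ : Fin d → ℤ)
    (hco : ∀ k, IsCoprime (v k) (n : ℤ)) :
    (LHDset d n v (fun k => (δ k : ℝ))).ncard = n ∧
    ∀ k : Fin d, Set.BijOn (fun x : Fin d → ℝ => x k)
      (LHDset d n v (fun k => (δ k : ℝ)))
      {t : ℝ | ∃ j : ℕ, j < n ∧ t = (2 * (j : ℝ) + 1) / (2 * n)} := by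
  have : NeZero n := ⟨by omega⟩
  rw [LHDset_eq_range]
  constructor
  · have hinj := lhdPoint_apply_injective n δ (hco ⟨0, hd⟩)
    rw [Set.ncard_range_of_injective (hinj.of_comp (f := fun x => x ⟨0, hd⟩)), Nat.card_zmod]
  · intro k
    have hinj := lhdPoint_apply_injective n δ (hco k)
    have hbij := (hinj.injOn_range (g := fun x => x k) (f := lhdPoint n v δ)).bijOn_image
    rw [← Set.range_comp] at hbij
    rwa [← range_lhdPoint_apply n δ (hco k)]
end

section
/- Let d ≥ 1 and n ≥ 2 be integers, let v ∈ ℤ^d have every entry coprime to n, and let δ ∈ ℤ^d. Then the sum over all unordered pairs {x,y} of distinct points of L(n,v,δ) of Π_{k=1}^d w(x_k − y_k)^{−2} equals (n/2)·Σ_{i=1}^{n−1} Π_{k=1}^d w(i·v_k/n)^{−2}; equivalently, the wrap-around projective separation criterion c_WP(L(n,v,δ)) = [Σ_{x≠y pairs} Π_{k=1}^d w(x_k−y_k)^{−2} / (n(n−1)/2)]^{1/d} equals [Σ_{i=1}^{n−1} Π_{k=1}^d w(i·v_k/n)^{−2} / (n−1)]^{1/d}. -/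
open Finset

lemma nid_int_add (t : ℝ) (m : ℤ) : nid (t + m) = nid t := by
  unfold nid
  rw [iInf, iInf]
  congr 1
  ext x
  constructor
  · rintro ⟨z, rfl⟩
    exact ⟨z - m, by push_cast; ring_nf⟩
  · rintro ⟨z, rfl⟩
    exact ⟨z + m, by push_cast; ring_nf⟩

lemma nid_nonneg (t : ℝ) : 0 ≤ nid t := le_ciInf fun z => abs_nonneg _

lemma nid_zero : nid 0 = 0 := by
  refine le_antisymm ?_ (nid_nonneg 0)
  have h := ciInf_le (f := fun z : ℤ => |(0:ℝ) - (z:ℝ)|)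
    ⟨0, by rintro x ⟨z, rfl⟩; exact abs_nonneg _⟩ 0
  simpa [nid] using h

lemma nid_div_congr {n : ℤ} (hn : (n : ℝ) ≠ 0) {a b : ℤ} (h : a % n = b % n) :
    nid ((a : ℝ) / n) = nid ((b : ℝ) / n) := by
  obtain ⟨t, ht⟩ : n ∣ a - b :=
    Int.dvd_of_emod_eq_zero (Int.emod_eq_emod_iff_emod_sub_eq_zero.mp h)
  have : (a : ℝ) / n = (b : ℝ) / n + t := by
    have : (a : ℝ) = b + n * t := by
      exact_mod_cast congrArg (fun x : ℤ => (x : ℝ)) (by linarith [ht])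
    rw [this]; field_simp
  rw [this, nid_int_add]

/-- the sum over unordered pairs of distinct points of L(n,v,δ) of
Π_k w(x_k − y_k)^{−2} equals (n/2)·Σ_{i=1}^{n−1} Π_k w(i·v_k/n)^{−2}; equivalently
the wrap-around projective separation criterion c_WP of L(n,v,δ) equals
[Σ_{i=1}^{n−1} Π_k w(i·v_k/n)^{−2} / (n−1)]^{1/d}. -/
theorem stmt_5 (d n : ℕ) (hd : 1 ≤ d) (hn : 2 ≤ n) (v δ : Fin d → ℤ)
    (hco : ∀ k, IsCoprime (v k) (n : ℤ))
    (S : Set (Fin d → ℝ)) (hS : S = LHDset d n v (fun k => (δ k : ℝ))) :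
    (1 / 2 : ℝ) * ∑ᶠ x ∈ S, ∑ᶠ y ∈ S, (if x = y then 0 else ∏ k, (nid (x k - y k) ^ 2)⁻¹)
        = (n / 2 : ℝ) * ∑ i ∈ Finset.Icc 1 (n - 1), ∏ k, (nid ((i : ℝ) * (v k : ℝ) / n) ^ 2)⁻¹ ∧
    (((1 / 2 : ℝ) * ∑ᶠ x ∈ S, ∑ᶠ y ∈ S,
        (if x = y then 0 else ∏ k, (nid (x k - y k) ^ 2)⁻¹)) / ((n : ℝ) * ((n : ℝ) - 1) / 2))
        ^ ((1 : ℝ) / d)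
      = ((∑ i ∈ Finset.Icc 1 (n - 1), ∏ k, (nid ((i : ℝ) * (v k : ℝ) / n) ^ 2)⁻¹)
          / ((n : ℝ) - 1)) ^ ((1 : ℝ) / d) := by
  classical
  have hn0 : (0:ℤ) < (n:ℤ) := by exact_mod_cast Nat.lt_of_lt_of_le Nat.zero_lt_two hn
  have hnZ : (n:ℤ) ≠ 0 := ne_of_gt hn0
  have hnR : (0:ℝ) < (n:ℝ) := by exact_mod_cast Nat.lt_of_lt_of_le Nat.zero_lt_two hn
  have hnR' : (n:ℝ) ≠ 0 := ne_of_gt hnR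
  set p : ℤ → Fin d → ℝ :=
    fun i k => (((i * v k + δ k) % (n:ℤ) : ℤ) : ℝ) / (n:ℝ) + 1 / (2 * (n:ℝ)) with hp
  set I : Finset ℤ := Finset.Ico (0:ℤ) (n:ℤ) with hI
  have hr0 : ∀ (i : ℤ) (k : Fin d), 0 ≤ (i * v k + δ k) % (n:ℤ) :=
    fun i k => Int.emod_nonneg _ hnZ
  have hr1 : ∀ (i : ℤ) (k : Fin d), (i * v k + δ k) % (n:ℤ) < (n:ℤ) :=
    fun i k => Int.emod_lt_of_pos _ hn0
  have hform : ∀ (i : ℤ) (k : Fin d),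
      p i k = (2 * (((i * v k + δ k) % (n:ℤ) : ℤ) : ℝ) + 1) / (2 * (n:ℝ)) := by
    intro i k; simp only [hp]; field_simp
  have hpo : ∀ (i : ℤ) (k : Fin d), 0 < p i k ∧ p i k < 1 := by
    intro i k
    have h0 : (0:ℝ) ≤ (((i * v k + δ k) % (n:ℤ) : ℤ) : ℝ) := by exact_mod_cast hr0 i k
    have h1 : (((i * v k + δ k) % (n:ℤ) : ℤ) : ℝ) ≤ (n:ℝ) - 1 := by
      have h2 : (i * v k + δ k) % (n:ℤ) ≤ (n:ℤ) - 1 := by have := hr1 i k; omega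
      exact_mod_cast h2
    rw [hform]
    constructor
    · apply div_pos (by linarith) (by positivity)
    · rw [div_lt_one (by positivity)]; linarith
  have hmem : ∀ i : ℤ, p i ∈ LHDset d n v (fun k => (δ k : ℝ)) := by
    intro i
    refine ⟨⟨fun k => -((i * v k + δ k) / (n:ℤ)), i, ?_⟩, ?_⟩
    · funext k
      have hq : (((i * v k + δ k) % (n:ℤ) : ℤ) : ℝ)
          = ((i : ℝ) * (v k : ℝ) + (δ k : ℝ)) - (n:ℝ) * (((i * v k + δ k) / (n:ℤ) : ℤ) : ℝ) := by
        push_cast [Int.emod_def]; ring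
      simp only [hp]
      rw [hq]
      push_cast
      field_simp
      ring
    · intro k
      exact ⟨le_of_lt (hpo i k).1, le_of_lt (hpo i k).2⟩
  have hper : ∀ i t : ℤ, p (i + (n:ℤ) * t) = p i := by
    intro i t; funext k
    simp only [hp]
    have h2 : ((i + (n:ℤ) * t) * v k + δ k) % (n:ℤ) = (i * v k + δ k) % (n:ℤ) := by
      have h3 : (i + (n:ℤ) * t) * v k + δ k = (i * v k + δ k) + (n:ℤ) * (t * v k) := by ring
      rw [h3, Int.add_mul_emod_self_left]
    rw [h2]
  have hxeq : ∀ (z : Fin d → ℤ) (i : ℤ),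
      (∀ k, (fun k => (z k : ℝ) + (i : ℝ) * (v k : ℝ) / n + (δ k : ℝ) / n + 1 / (2 * n)) k
          ∈ Set.Icc (0:ℝ) 1) →
      (fun k => (z k : ℝ) + (i : ℝ) * (v k : ℝ) / n + (δ k : ℝ) / n + 1 / (2 * n)) = p i := by
    intro z i hb
    funext k
    set x : ℝ := (z k : ℝ) + (i : ℝ) * (v k : ℝ) / n + (δ k : ℝ) / n + 1 / (2 * n) with hx
    have hgap : x - p i k = ((z k + (i * v k + δ k) / (n:ℤ) : ℤ) : ℝ) := by
      have hq : (((i * v k + δ k) % (n:ℤ) : ℤ) : ℝ)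
          = ((i : ℝ) * (v k : ℝ) + (δ k : ℝ)) - (n:ℝ) * (((i * v k + δ k) / (n:ℤ) : ℤ) : ℝ) := by
        push_cast [Int.emod_def]; ring
      simp only [hp, hx]
      rw [hq]
      push_cast
      field_simp
      ring
    have hb' := hb k
    simp only [Set.mem_Icc] at hb'
    simp only [← hx] at hb'
    have hpik := hpo i k
    have habs : |x - p i k| < 1 := by
      rw [abs_lt]; exact ⟨by linarith [hb'.1, hpik.2], by linarith [hb'.2, hpik.1]⟩
    rw [hgap] at habs
    rw [← Int.cast_abs] at habs
    have h5 : |z k + (i * v k + δ k) / (n:ℤ)| < 1 := by exact_mod_cast habs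
    obtain ⟨h5a, h5b⟩ := abs_lt.mp h5
    have h6 : z k + (i * v k + δ k) / (n:ℤ) = 0 := by omega
    have : x - p i k = 0 := by rw [hgap, h6]; simp
    linarith
  have hSim : S = ↑(I.image p) := by
    rw [hS]
    ext x
    simp only [Finset.coe_image, Set.mem_image, Finset.mem_coe]
    constructor
    · rintro ⟨⟨z, i, rfl⟩, hb⟩
      refine ⟨i % (n:ℤ), ?_, ?_⟩
      · simp only [hI, Finset.mem_Ico]
        exact ⟨Int.emod_nonneg _ hnZ, Int.emod_lt_of_pos _ hn0⟩
      · have h7 : p i = p (i % (n:ℤ)) := by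
          have h8 : i = i % (n:ℤ) + (n:ℤ) * (i / (n:ℤ)) := (Int.emod_add_mul_ediv i (n:ℤ)).symm
          conv_lhs => rw [h8]
          exact hper _ _
        rw [← h7]
        exact (hxeq z i hb).symm
    · rintro ⟨i, hi, rfl⟩
      exact hmem i
  have hinj : ∀ i ∈ I, ∀ j ∈ I, p i = p j → i = j := by
    intro i hi j hj hpij
    set k0 : Fin d := ⟨0, hd⟩
    have hco0 : IsCoprime ((n:ℤ)) (v k0) := (hco k0).symm
    have heq : (i * v k0 + δ k0) % (n:ℤ) = (j * v k0 + δ k0) % (n:ℤ) := by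
      have h9 := congrFun hpij k0
      simp only [hp] at h9
      have h11 : ((((i * v k0 + δ k0) % (n:ℤ)) : ℤ) : ℝ) / n
          = ((((j * v k0 + δ k0) % (n:ℤ)) : ℤ) : ℝ) / n := by linarith
      field_simp at h11
      exact_mod_cast h11
    have hdvd : (n:ℤ) ∣ (i - j) * v k0 := by
      have h12 := Int.emod_eq_emod_iff_emod_sub_eq_zero.mp heq
      have h13 : (i * v k0 + δ k0) - (j * v k0 + δ k0) = (i - j) * v k0 := by ring
      rw [h13] at h12
      exact Int.dvd_of_emod_eq_zero h12
    have hdvd2 : (n:ℤ) ∣ (i - j) := hco0.dvd_of_dvd_mul_right hdvd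
    simp only [hI, Finset.mem_Ico] at hi hj
    have h14 : |i - j| < (n:ℤ) := by rw [abs_lt]; omega
    have := Int.eq_zero_of_abs_lt_dvd hdvd2 h14
    omega
  have hdiff : ∀ (i j : ℤ) (k : Fin d),
      nid (p i k - p j k) = nid ((((i - j) % (n:ℤ) : ℤ) : ℝ) * (v k : ℝ) / (n:ℝ)) := by
    intro i j k
    have h1 : p i k - p j k
        = (((i * v k + δ k) % (n:ℤ) - (j * v k + δ k) % (n:ℤ) : ℤ) : ℝ) / (n:ℝ) := by
      simp only [hp]; push_cast; ring
    have h2 : (((i - j) % (n:ℤ) : ℤ) : ℝ) * (v k : ℝ) / (n:ℝ)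
        = ((((i - j) % (n:ℤ)) * v k : ℤ) : ℝ) / (n:ℝ) := by push_cast; ring
    rw [h1, h2]
    apply nid_div_congr (by exact_mod_cast hnR')
    conv_lhs => rw [Int.sub_emod, Int.emod_emod_of_dvd _ dvd_rfl,
      Int.emod_emod_of_dvd _ dvd_rfl, ← Int.sub_emod]
    conv_rhs => rw [Int.mul_emod, Int.emod_emod_of_dvd _ dvd_rfl, ← Int.mul_emod]
    congr 1
    ring
  set F : ℤ → ℝ := fun m => ∏ k, (nid ((m : ℝ) * (v k : ℝ) / (n:ℝ)) ^ 2)⁻¹ with hF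
  have hF0 : F 0 = 0 := by
    simp only [hF]
    apply Finset.prod_eq_zero (Finset.mem_univ (⟨0, hd⟩ : Fin d))
    norm_num [nid_zero]
  have hsummand : ∀ i ∈ I, ∀ j ∈ I,
      (if p i = p j then 0 else ∏ k, (nid (p i k - p j k) ^ 2)⁻¹) = F ((i - j) % (n:ℤ)) := by
    intro i hi j hj
    by_cases hij : i = j
    · subst hij
      simp [hF0]
    · rw [if_neg (fun h => hij (hinj i hi j hj h))]
      simp only [hF]
      exact Finset.prod_congr rfl fun k _ => by rw [hdiff i j k]
  have key : (∑ᶠ x ∈ S, ∑ᶠ y ∈ S, (if x = y then 0 else ∏ k, (nid (x k - y k) ^ 2)⁻¹))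
      = (n:ℝ) * ∑ i ∈ Finset.Icc 1 (n-1), ∏ k, (nid ((i : ℝ) * (v k : ℝ) / n) ^ 2)⁻¹ := by
    rw [hSim]
    rw [finsum_mem_coe_finset]
    simp only [finsum_mem_coe_finset]
    rw [Finset.sum_image hinj]
    rw [Finset.sum_congr rfl (fun i _ => Finset.sum_image hinj)]
    calc ∑ i ∈ I, ∑ j ∈ I, (if p i = p j then 0 else ∏ k, (nid (p i k - p j k) ^ 2)⁻¹)
        = ∑ i ∈ I, ∑ j ∈ I, F ((i - j) % (n:ℤ)) :=
          Finset.sum_congr rfl fun i hi => Finset.sum_congr rfl fun j hj => hsummand i hi j hj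
      _ = ∑ _i ∈ I, ∑ m ∈ I, F m := by
          refine Finset.sum_congr rfl fun i _ => ?_
          refine Finset.sum_nbij' (fun j => (i - j) % (n:ℤ)) (fun m => (i - m) % (n:ℤ))
            ?_ ?_ ?_ ?_ ?_
          · intro j _
            simp only [hI, Finset.mem_Ico]
            exact ⟨Int.emod_nonneg _ hnZ, Int.emod_lt_of_pos _ hn0⟩
          · intro m _
            simp only [hI, Finset.mem_Ico]
            exact ⟨Int.emod_nonneg _ hnZ, Int.emod_lt_of_pos _ hn0⟩
          · intro j hj
            simp only [hI, Finset.mem_Ico] at hj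
            show (i - (i - j) % (n:ℤ)) % (n:ℤ) = j
            conv_lhs => rw [Int.sub_emod, Int.emod_emod_of_dvd _ dvd_rfl, ← Int.sub_emod]
            rw [sub_sub_cancel]
            exact Int.emod_eq_of_lt hj.1 hj.2
          · intro m hm
            simp only [hI, Finset.mem_Ico] at hm
            show (i - (i - m) % (n:ℤ)) % (n:ℤ) = m
            conv_lhs => rw [Int.sub_emod, Int.emod_emod_of_dvd _ dvd_rfl, ← Int.sub_emod]
            rw [sub_sub_cancel]
            exact Int.emod_eq_of_lt hm.1 hm.2
          · intro j _
            rfl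
      _ = (n:ℝ) * ∑ m ∈ I, F m := by
          rw [Finset.sum_const, hI, Int.card_Ico]
          simp only [sub_zero, Int.toNat_natCast]
          rw [nsmul_eq_mul]
      _ = (n:ℝ) * ∑ m ∈ Finset.Ico (1:ℤ) (n:ℤ), F m := by
          congr 1
          have hins : I = insert (0:ℤ) (Finset.Ico (1:ℤ) (n:ℤ)) := by
            rw [hI]; ext m
            simp only [Finset.mem_Ico, Finset.mem_insert]
            omega
          rw [hins, Finset.sum_insert (by simp), hF0, zero_add]
      _ = (n:ℝ) * ∑ i ∈ Finset.Icc 1 (n-1), ∏ k, (nid ((i : ℝ) * (v k : ℝ) / n) ^ 2)⁻¹ := by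
          congr 1
          refine Finset.sum_nbij' (fun m => m.toNat) (fun i => (i : ℤ)) ?_ ?_ ?_ ?_ ?_
          · intro m hm
            simp only [Finset.mem_Ico] at hm
            simp only [Finset.mem_Icc]
            omega
          · intro i hi
            simp only [Finset.mem_Icc] at hi
            simp only [Finset.mem_Ico]
            omega
          · intro m hm
            simp only [Finset.mem_Ico] at hm
            show ((m.toNat : ℕ) : ℤ) = m
            omega
          · intro i _
            show ((i : ℤ)).toNat = i
            simp
          · intro m hm
            simp only [Finset.mem_Ico] at hm
            show F m = ∏ k, (nid (((m.toNat : ℕ) : ℝ) * (v k : ℝ) / (n:ℝ)) ^ 2)⁻¹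
            simp only [hF]
            refine Finset.prod_congr rfl fun k _ => ?_
            have hc : ((m.toNat : ℕ) : ℝ) = ((m : ℤ) : ℝ) :=
              mod_cast congrArg (fun t : ℤ => (t : ℝ)) (Int.toNat_of_nonneg (by omega))
            rw [hc]
  have part1 : (1 / 2 : ℝ) * ∑ᶠ x ∈ S, ∑ᶠ y ∈ S,
      (if x = y then 0 else ∏ k, (nid (x k - y k) ^ 2)⁻¹)
      = (n / 2 : ℝ) * ∑ i ∈ Finset.Icc 1 (n - 1), ∏ k, (nid ((i : ℝ) * (v k : ℝ) / n) ^ 2)⁻¹ := by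
    rw [key]; ring
  refine ⟨part1, ?_⟩
  rw [part1]
  congr 1
  have h1 : (n:ℝ) - 1 ≠ 0 := by
    have : (2:ℝ) ≤ (n:ℝ) := by exact_mod_cast hn
    linarith
  field_simp
end

section
/- Let n ≥ 2 be an integer, let v = (v₁, v₂) ∈ ℤ² have both entries coprime to n, and let δ ∈ ℤ². Then the Euclidean separation distance of the two-dimensional design L(n,v,δ) equals its wrap-around separation distance: min_{x,y ∈ L(n,v,δ), x ≠ y} ‖x − y‖ = min_{x,y ∈ L(n,v,δ), x ≠ y} w(x − y), where ‖·‖ denotes the Euclidean norm on ℝ². -/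
open Finset

lemma nid_bdd (t : ℝ) : BddBelow (Set.range fun z : ℤ => |t - (z:ℝ)|) :=
  ⟨0, by rintro r ⟨z, rfl⟩; positivity⟩

lemma nid_le (t : ℝ) (z : ℤ) : nid t ≤ |t - z| := ciInf_le (nid_bdd t) z

lemma nid_le_abs (t : ℝ) : nid t ≤ |t| := by simpa using nid_le t 0

lemma nid_int_div (N r : ℤ) (hN : 0 < N) :
    nid ((r:ℝ)/N) = ((min (r % N) (N - r % N) : ℤ) : ℝ)/N := by
  set m := r % N with hm
  have hm0 : 0 ≤ m := Int.emod_nonneg r (by omega)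
  have hmN : m < N := Int.emod_lt_of_pos r hN
  have hNR : (0:ℝ) < (N:ℝ) := by exact_mod_cast hN
  have key : ∀ z : ℤ, (r:ℝ)/N - z = ((r - N*z : ℤ):ℝ)/N := by
    intro z; push_cast; field_simp
  apply le_antisymm
  · rcases le_or_gt m (N - m) with h | h
    · calc nid ((r:ℝ)/N) ≤ |(r:ℝ)/N - (r/N : ℤ)| := nid_le _ _
        _ = ((min m (N - m) : ℤ):ℝ)/N := by
          rw [key, min_eq_left h]
          have : r - N * (r/N) = m := by rw [hm, Int.emod_def]
          rw [this, abs_of_nonneg (div_nonneg (by exact_mod_cast hm0) hNR.le)]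
    · calc nid ((r:ℝ)/N) ≤ |(r:ℝ)/N - (r/N + 1 : ℤ)| := nid_le _ _
        _ = ((min m (N - m) : ℤ):ℝ)/N := by
          rw [key, min_eq_right h.le]
          have : r - N * (r/N + 1) = m - N := by rw [hm, Int.emod_def]; ring
          rw [this, abs_div, abs_of_pos hNR]
          congr 1
          rw [abs_of_nonpos (by exact_mod_cast (by omega : (m - N : ℤ) ≤ 0))]
          push_cast; ring
  · apply le_ciInf
    intro z
    rw [key, abs_div, abs_of_pos hNR, div_le_div_iff_of_pos_right hNR]
    have : min m (N - m) ≤ |r - N * z| := by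
      have hrz : r - N*z = m + N*(r/N - z) := by rw [hm, Int.emod_def]; ring
      rcases le_or_gt 0 (r/N - z) with h | h
      · have : N * (r/N - z) ≥ 0 := by positivity
        rw [abs_of_nonneg (by omega)]; omega
      · have h1 : r/N - z ≤ -1 := by omega
        have : N * (r/N - z) ≤ N * (-1) := by
          apply mul_le_mul_of_nonneg_left h1 hN.le
        rw [abs_of_nonpos (by omega)]; omega
    calc ((min m (N-m) : ℤ):ℝ) ≤ ((|r - N*z| : ℤ):ℝ) := by exact_mod_cast this
      _ = |((r - N*z : ℤ):ℝ)| := by push_cast [Int.cast_abs]; ring_nf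

/-- good residue predicate -/
def Q (N m : ℤ) (b : ℕ) : Prop := (2*m < N → (b:ℤ) + m < N) ∧ (N < 2*m → N ≤ (b:ℤ) + m)

instance (N m : ℤ) : DecidablePred (Q N m) := fun _ => by unfold Q; infer_instance

lemma card_Q (n : ℕ) (hn : 2 ≤ n) (m : ℤ) (hm : 0 ≤ m) (hmn : m < n) :
    n < 2 * ((range n).filter (Q n m)).card := by
  rcases lt_trichotomy (2*m) (n:ℤ) with h | h | h
  · have he : (range n).filter (Q n m) = range ((n:ℤ) - m).toNat := by
      ext b; simp only [mem_filter, mem_range, Q]; omega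
    rw [he, card_range]; omega
  · have he : (range n).filter (Q n m) = range n := by
      ext b; simp only [mem_filter, mem_range, Q]; omega
    rw [he, card_range]; omega
  · have he : (range n).filter (Q n m) = Finset.Ico ((n:ℤ) - m).toNat n := by
      ext b; simp only [mem_filter, mem_range, Q, Finset.mem_Ico]; omega
    rw [he, Nat.card_Ico]; omega

lemma card_zmod (n : ℕ) [NeZero n] (P : ℕ → Prop) [DecidablePred P] :
    (univ.filter fun x : ZMod n => P x.val).card = ((range n).filter P).card := by
  apply Finset.card_bij (fun x _ => ZMod.val x)
  · intro x hx
    simp only [mem_filter, mem_range]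
    exact ⟨ZMod.val_lt x, (mem_filter.mp hx).2⟩
  · intro x _ y _ h
    exact ZMod.val_injective n h
  · intro b hb
    simp only [mem_filter, mem_range] at hb
    refine ⟨(b : ZMod n), ?_, ?_⟩
    · simp only [mem_filter, mem_univ, true_and, ZMod.val_natCast,
        Nat.mod_eq_of_lt hb.1]
      exact hb.2
    · simp [ZMod.val_natCast, Nat.mod_eq_of_lt hb.1]

lemma card_comp (n : ℕ) [NeZero n] (P : ZMod n → Prop) [DecidablePred P]
    (ψ : ZMod n → ZMod n) (hψ : Function.Bijective ψ) :
    (univ.filter fun c => P (ψ c)).card = (univ.filter P).card := by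
  apply Finset.card_bij (fun c _ => ψ c)
  · intro c hc
    simp only [mem_filter, mem_univ, true_and] at hc ⊢
    exact hc
  · intro c _ c' _ h
    exact hψ.1 h
  · intro x hx
    obtain ⟨c, rfl⟩ := hψ.2 x
    simp only [mem_filter, mem_univ, true_and] at hx
    exact ⟨c, by simpa using hx, rfl⟩
noncomputable def pt (n : ℕ) (v δ : Fin 2 → ℤ) (i : ℤ) : Fin 2 → ℝ :=
  fun k => (((i * v k + δ k) % (n:ℤ) : ℤ) : ℝ) / n + 1 / (2*n)

lemma exists_pair (n : ℕ) (hn : 2 ≤ n) (v δ : Fin 2 → ℤ)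
    (hco : ∀ k, IsCoprime (v k) (n : ℤ)) (t : ℤ) :
    ∃ c : ℤ, ∀ k, (pt n v δ (c+t) k - pt n v δ c k)^2
      = (((min ((t * v k) % (n:ℤ)) ((n:ℤ) - (t * v k) % (n:ℤ)) : ℤ):ℝ) / n)^2 := by
  haveI : NeZero n := ⟨by omega⟩
  have hn0 : (0:ℤ) < (n:ℤ) := by omega
  set m : Fin 2 → ℤ := fun k => (t * v k) % (n:ℤ) with hm
  have hm0 : ∀ k, 0 ≤ m k := fun k => Int.emod_nonneg _ (by omega)
  have hmn : ∀ k, m k < (n:ℤ) := fun k => Int.emod_lt_of_pos _ hn0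
  have hunit : ∀ k, ∃ w : ZMod n, w * ((v k : ℤ) : ZMod n) = 1 := by
    intro k
    obtain ⟨a, b, hab⟩ := hco k
    refine ⟨((a : ℤ) : ZMod n), ?_⟩
    have h1 : ((a * v k + b * (n:ℤ) : ℤ) : ZMod n) = 1 := by rw [hab]; simp
    push_cast at h1
    simpa using h1
  choose w hw using hunit
  set ψ : Fin 2 → ZMod n → ZMod n :=
    fun k c => c * ((v k : ℤ) : ZMod n) + ((δ k : ℤ) : ZMod n) with hψdef
  have hψ : ∀ k, Function.Bijective (ψ k) := by
    intro k
    constructor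
    · intro c c' h
      simp only [hψdef, add_left_inj] at h
      calc c = c * (((v k : ℤ) : ZMod n) * w k) := by rw [mul_comm _ (w k), hw, mul_one]
        _ = c * ((v k : ℤ) : ZMod n) * w k := by rw [mul_assoc]
        _ = c' * ((v k : ℤ) : ZMod n) * w k := by rw [h]
        _ = c' * (((v k : ℤ) : ZMod n) * w k) := by rw [mul_assoc]
        _ = c' := by rw [mul_comm _ (w k), hw, mul_one]
    · intro x
      refine ⟨(x - ((δ k : ℤ) : ZMod n)) * w k, ?_⟩
      simp only [hψdef]
      rw [mul_assoc, hw k, mul_one, sub_add_cancel]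
  set A : Fin 2 → Finset (ZMod n) :=
    fun k => univ.filter (fun c => Q (n:ℤ) (m k) ((ψ k c).val)) with hA
  have hcard : ∀ k, (n:ℕ) < 2 * (A k).card := by
    intro k
    have h1 : (univ.filter (fun c : ZMod n => Q (n:ℤ) (m k) ((ψ k c).val))).card
        = (univ.filter fun x : ZMod n => Q (n:ℤ) (m k) x.val).card :=
      card_comp n (fun x : ZMod n => Q (n:ℤ) (m k) x.val) (ψ k) (hψ k)
    rw [hA]
    rw [h1, card_zmod n _]
    exact card_Q n hn (m k) (hm0 k) (hmn k)
  have hinter : (A 0 ∩ A 1).Nonempty := by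
    rw [← Finset.card_pos]
    have hu : (A 0 ∪ A 1).card ≤ n := by
      calc (A 0 ∪ A 1).card ≤ (univ : Finset (ZMod n)).card :=
            Finset.card_le_card (Finset.subset_univ _)
        _ = n := by rw [Finset.card_univ, ZMod.card]
    have hui := Finset.card_union_add_card_inter (A 0) (A 1)
    have h0 := hcard 0
    have h1 := hcard 1
    omega
  obtain ⟨c0, hc0⟩ := hinter
  refine ⟨(c0.val : ℤ), fun k => ?_⟩
  have hck : c0 ∈ A k := by
    fin_cases k
    · exact (Finset.mem_inter.mp hc0).1
    · exact (Finset.mem_inter.mp hc0).2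
  set bn : ℕ := (ψ k c0).val with hbn
  have hQ : Q (n:ℤ) (m k) bn := by
    rw [hA] at hck
    exact (Finset.mem_filter.mp hck).2
  set X : ℤ := (c0.val : ℤ) * v k + δ k with hX
  have hXcast : ((X : ℤ) : ZMod n) = ψ k c0 := by
    simp only [hX, hψdef]
    push_cast
    rw [ZMod.natCast_rightInverse c0]
  have hXmod : X % (n:ℤ) = (bn : ℤ) := by
    have h := ZMod.val_intCast (n := n) X
    rw [hXcast] at h
    rw [← h]
  have hA' : (((c0.val:ℤ) + t) * v k + δ k) % (n:ℤ) = ((bn:ℤ) + m k) % (n:ℤ) := by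
    rw [show ((c0.val:ℤ) + t) * v k + δ k = X + t * v k by rw [hX]; ring,
      Int.add_emod, hXmod]
  set D : ℤ := (((c0.val:ℤ)+t) * v k + δ k) % (n:ℤ) - X % (n:ℤ) with hD
  have hbn' : (bn:ℤ) < n := by exact_mod_cast ZMod.val_lt (ψ k c0)
  have hbn0 : (0:ℤ) ≤ (bn:ℤ) := Int.ofNat_nonneg bn
  have hmk0 := hm0 k
  have hmkn := hmn k
  have hdisj : D = min (m k) ((n:ℤ) - m k) ∨ D = -(min (m k) ((n:ℤ) - m k)) := by
    obtain ⟨hq1, hq2⟩ := hQ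
    rcases lt_trichotomy (2 * m k) (n:ℤ) with h | h | h
    · left
      have hlt : (bn:ℤ) + m k < n := hq1 h
      rw [min_eq_left (by omega), hD, hA', hXmod,
        Int.emod_eq_of_lt (by omega) hlt]
      omega
    · rcases lt_or_ge ((bn:ℤ) + m k) (n:ℤ) with hlt | hge
      · left
        rw [min_eq_left (by omega), hD, hA', hXmod,
          Int.emod_eq_of_lt (by omega) hlt]
        omega
      · right
        have e1 : ((bn:ℤ) + m k) % (n:ℤ) = (bn:ℤ) + m k - n := by
          rw [show (bn:ℤ) + m k = ((bn:ℤ) + m k - n) + (n:ℤ) * 1 by ring,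
            Int.add_mul_emod_self_left, Int.emod_eq_of_lt (by omega) (by omega)]
          ring
        rw [min_eq_left (by omega), hD, hA', hXmod, e1]
        omega
    · right
      have hge : (n:ℤ) ≤ (bn:ℤ) + m k := hq2 h
      have e1 : ((bn:ℤ) + m k) % (n:ℤ) = (bn:ℤ) + m k - n := by
        rw [show (bn:ℤ) + m k = ((bn:ℤ) + m k - n) + (n:ℤ) * 1 by ring,
          Int.add_mul_emod_self_left, Int.emod_eq_of_lt (by omega) (by omega)]
        ring
      rw [min_eq_right (by omega), hD, hA', hXmod, e1]
      omega
  have hdd : pt n v δ ((c0.val:ℤ)+t) k - pt n v δ (c0.val:ℤ) k = ((D:ℤ):ℝ)/(n:ℝ) := by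
    unfold pt
    rw [hD, hX]
    push_cast
    ring
  rw [hdd]
  rcases hdisj with h | h <;> rw [h] <;> push_cast <;> ring
lemma LHD_eq_pt (n : ℕ) (hn : 2 ≤ n) (v δ : Fin 2 → ℤ) :
    LHDset 2 n v (fun k => (δ k : ℝ)) = {x | ∃ i : ℤ, x = pt n v δ i} := by
  have hn0 : (0:ℝ) < (n:ℝ) := by positivity
  have hnz : ((n:ℤ)) ≠ 0 := by omega
  have hnzp : (0:ℤ) < (n:ℤ) := by omega
  ext x
  constructor
  · rintro ⟨⟨z, i, rfl⟩, hbox⟩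
    refine ⟨i, funext fun k => ?_⟩
    set a : ℤ := z k * n + i * v k + δ k with ha
    have hcoord : (z k : ℝ) + (i : ℝ) * (v k : ℝ) / n + (δ k : ℝ) / n + 1 / (2 * n)
        = ((2*a+1 : ℤ):ℝ)/(2*n) := by push_cast [ha]; field_simp
    have hb := hbox k
    simp only [Set.mem_Icc] at hb
    rw [hcoord] at hb
    have h1 : (0:ℤ) ≤ 2*a+1 := by
      by_contra h
      push_neg at h
      have hr : ((2*a+1 : ℤ):ℝ) < 0 := by exact_mod_cast h
      have := div_neg_of_neg_of_pos hr (by positivity : (0:ℝ) < 2*(n:ℝ))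
      linarith [hb.1]
    have h2 : (2*a+1 : ℤ) ≤ 2*n := by
      have := (div_le_one (by positivity : (0:ℝ) < 2*(n:ℝ))).mp hb.2
      exact_mod_cast this
    have ha0 : 0 ≤ a := by omega
    have haN : a < n := by omega
    have hmod : (i * v k + δ k) % (n:ℤ) = a := by
      have : a % (n:ℤ) = (i * v k + δ k) % (n:ℤ) := by
        conv_lhs => rw [ha]
        rw [show z k * (n:ℤ) + i * v k + δ k = i * v k + δ k + (n:ℤ) * z k by ring]
        simp [Int.add_mul_emod_self_left]
      rw [← this, Int.emod_eq_of_lt ha0 haN]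
    show _ = pt n v δ i k
    rw [pt, hmod, hcoord]
    push_cast
    field_simp
  · rintro ⟨i, rfl⟩
    constructor
    · refine ⟨fun k => -((i * v k + δ k) / n), i, funext fun k => ?_⟩
      have h : (i * v k + δ k) % (n:ℤ) = i * v k + δ k - n * ((i * v k + δ k)/n) :=
        Int.emod_def _ _
      show pt n v δ i k = _
      rw [pt, h]
      push_cast
      field_simp
      ring
    · intro k
      have h0 : (0:ℤ) ≤ (i * v k + δ k) % (n:ℤ) := Int.emod_nonneg _ hnz
      have hlt : (i * v k + δ k) % (n:ℤ) < n := Int.emod_lt_of_pos _ hnzp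
      have h0' : (0:ℝ) ≤ (((i * v k + δ k) % (n:ℤ) : ℤ):ℝ) := by exact_mod_cast h0
      have hlt' : (((i * v k + δ k) % (n:ℤ) : ℤ):ℝ) ≤ (n:ℝ) - 1 := by
        have : (i * v k + δ k) % (n:ℤ) ≤ (n:ℤ) - 1 := by omega
        exact_mod_cast this
      simp only [pt, Set.mem_Icc]
      constructor
      · positivity
      · rw [div_add_div _ _ (ne_of_gt hn0) (by positivity), div_le_one (by positivity)]
        nlinarith
lemma pt_coord_eq (n : ℕ) (hn : 2 ≤ n) (v δ : Fin 2 → ℤ) (i j : ℤ) (k : Fin 2) :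
    pt n v δ i k = pt n v δ j k ↔
      (i * v k + δ k) % (n:ℤ) = (j * v k + δ k) % (n:ℤ) := by
  have hn0 : (0:ℝ) < (n:ℝ) := by positivity
  unfold pt
  constructor
  · intro h
    have := add_right_cancel h
    rw [div_eq_div_iff (ne_of_gt hn0) (ne_of_gt hn0)] at this
    have h2 := mul_right_cancel₀ (ne_of_gt hn0) this
    exact_mod_cast h2
  · intro h; rw [h]

lemma pt_eq_iff (n : ℕ) (hn : 2 ≤ n) (v δ : Fin 2 → ℤ)
    (hco : ∀ k, IsCoprime (v k) (n : ℤ)) (i j : ℤ) :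
    pt n v δ i = pt n v δ j ↔ (n:ℤ) ∣ (i - j) := by
  constructor
  · intro h
    have h0 : (i * v 0 + δ 0) % (n:ℤ) = (j * v 0 + δ 0) % (n:ℤ) :=
      (pt_coord_eq n hn v δ i j 0).mp (congrFun h 0)
    have hd : (n:ℤ) ∣ (j * v 0 + δ 0) - (i * v 0 + δ 0) := Int.ModEq.dvd h0
    have hd2 : (n:ℤ) ∣ (j - i) * v 0 := by
      have : (j * v 0 + δ 0) - (i * v 0 + δ 0) = (j - i) * v 0 := by ring
      rwa [this] at hd
    have := (hco 0).symm.dvd_of_dvd_mul_right hd2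
    rw [show i - j = -(j - i) by ring]
    exact dvd_neg.mpr this
  · intro h
    funext k
    rw [pt_coord_eq n hn v δ i j k]
    have : (n:ℤ) ∣ (j * v k + δ k) - (i * v k + δ k) := by
      have : (j * v k + δ k) - (i * v k + δ k) = (j - i) * v k := by ring
      rw [this]
      refine Dvd.dvd.mul_right ?_ _
      rw [show j - i = -(i - j) by ring]
      exact dvd_neg.mpr h
    exact Int.modEq_iff_dvd.mpr this

lemma nid_pt (n : ℕ) (hn : 2 ≤ n) (v δ : Fin 2 → ℤ) (i j : ℤ) (k : Fin 2) :
    nid (pt n v δ i k - pt n v δ j k)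
      = ((min (((i-j) * v k) % (n:ℤ)) ((n:ℤ) - ((i-j) * v k) % (n:ℤ)) : ℤ):ℝ) / (n:ℝ) := by
  have hn0 : (0:ℤ) < (n:ℤ) := by omega
  have hAB : ((i * v k + δ k) % (n:ℤ) - (j * v k + δ k) % (n:ℤ)) % (n:ℤ)
      = ((i-j) * v k) % (n:ℤ) := by
    rw [← Int.sub_emod]
    congr 1
    ring
  have hdiff : pt n v δ i k - pt n v δ j k
      = ((((i * v k + δ k) % (n:ℤ) - (j * v k + δ k) % (n:ℤ)) : ℤ):ℝ)/((n:ℤ):ℝ) := by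
    unfold pt; push_cast; ring
  rw [hdiff, nid_int_div (n:ℤ) _ hn0, hAB]
  norm_cast

theorem stmt_9 (n : ℕ) (hn : 2 ≤ n) (v δ : Fin 2 → ℤ)
    (hco : ∀ k, IsCoprime (v k) (n : ℤ))
    (S : Set (Fin 2 → ℝ)) (hS : S = LHDset 2 n v (fun k => (δ k : ℝ))) :
    sInf {r : ℝ | ∃ x ∈ S, ∃ y ∈ S, x ≠ y ∧ r = Real.sqrt (∑ k, (x k - y k) ^ 2)} =
    sInf {r : ℝ | ∃ x ∈ S, ∃ y ∈ S, x ≠ y ∧ r = wdist (x - y)} := by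
  have hSP : S = {x | ∃ i : ℤ, x = pt n v δ i} := by
    rw [hS, LHD_eq_pt n hn v δ]
  set E := {r : ℝ | ∃ x ∈ S, ∃ y ∈ S, x ≠ y ∧ r = Real.sqrt (∑ k, (x k - y k) ^ 2)} with hE
  set W := {r : ℝ | ∃ x ∈ S, ∃ y ∈ S, x ≠ y ∧ r = wdist (x - y)} with hW
  have hWE : W ⊆ E := by
    rintro r ⟨x, hx, y, hy, hxy, rfl⟩
    rw [hSP] at hx hy
    obtain ⟨i, rfl⟩ := hx
    obtain ⟨j, rfl⟩ := hy
    obtain ⟨c, hc⟩ := exists_pair n hn v δ hco (i - j)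
    refine ⟨pt n v δ (c + (i-j)), ?_, pt n v δ c, ?_, ?_, ?_⟩
    · rw [hSP]; exact ⟨c + (i-j), rfl⟩
    · rw [hSP]; exact ⟨c, rfl⟩
    · intro h
      apply hxy
      rw [pt_eq_iff n hn v δ hco] at h ⊢
      have he : c + (i-j) - c = i - j := by ring
      rwa [he] at h
    · rw [wdist]
      congr 1
      apply Finset.sum_congr rfl
      intro k _
      rw [Pi.sub_apply, nid_pt n hn v δ i j k, ← hc k]
  have hEW : ∀ r ∈ E, ∃ s ∈ W, s ≤ r := by
    rintro r ⟨x, hx, y, hy, hxy, rfl⟩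
    refine ⟨wdist (x - y), ⟨x, hx, y, hy, hxy, rfl⟩, ?_⟩
    rw [wdist]
    apply Real.sqrt_le_sqrt
    apply Finset.sum_le_sum
    intro k _
    rw [Pi.sub_apply]
    calc nid (x k - y k) ^ 2 ≤ |x k - y k| ^ 2 := by
          apply pow_le_pow_left₀ (nid_nonneg _) (nid_le_abs _)
      _ = (x k - y k) ^ 2 := sq_abs _
  have hbddW : BddBelow W := by
    refine ⟨0, ?_⟩
    rintro r ⟨x, _, y, _, _, rfl⟩
    exact Real.sqrt_nonneg _
  have hbddE : BddBelow E := by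
    refine ⟨0, ?_⟩
    rintro r ⟨x, _, y, _, _, rfl⟩
    exact Real.sqrt_nonneg _
  by_cases hEne : E.Nonempty
  · have hWne : W.Nonempty := by
      obtain ⟨r, hr⟩ := hEne
      obtain ⟨s, hs, _⟩ := hEW r hr
      exact ⟨s, hs⟩
    apply le_antisymm
    · exact csInf_le_csInf hbddE hWne hWE
    · apply le_csInf hEne
      intro r hr
      obtain ⟨s, hs, hsr⟩ := hEW r hr
      exact (csInf_le hbddW hs).trans hsr
  · have hE' : E = ∅ := Set.not_nonempty_iff_eq_empty.mp hEne
    have hW' : W = ∅ := Set.not_nonempty_iff_eq_empty.mp fun hW => hEne (hW.mono hWE)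
    rw [hE', hW']
end

section
/- Let n ≥ 1 be an integer, let v = (v₁, v₂) ∈ ℤ² have both entries coprime to n, and let δ ∈ ℤ². Let Λ = { z + i·v/n : z ∈ ℤ², i ∈ ℤ } ⊂ ℝ², and suppose a, b ∈ ℝ² form a ℤ-basis of Λ (i.e., Λ = ℤa + ℤb) satisfying 0 < ‖a‖ ≤ ‖b‖ and |a·b| ≤ ‖a‖²/2, where ‖·‖ and · denote the Euclidean norm and inner product. Set y = (a·b)/‖a‖² and z = ‖b − y·a‖/‖a‖. Then the wrap-around fill distance of L(n,v,δ), namely sup_{u ∈ [0,1]²} min_{x ∈ L(n,v,δ)} w(u − x), equals ( √( z² + (z² − |y| + y²)² ) / (2z) ) · ‖a‖. -/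
open Finset

/-!
Since `ℤ² ⊆ Λ = ℤa + ℤb`, the design is a translate `c + Λ` reduced modulo `ℤ²`, and the
wrap-around distance is the Euclidean distance modulo `ℤ²`; so the fill distance is the covering
radius of `Λ`. After replacing `b` by `-b` we may assume `0 ≤ ⟪a, b⟫ ≤ ‖a‖² / 2`. The
circumcentre `O` of `0, a, b` is then a deep hole: `‖O - (p a + q b)‖² - ‖O‖²` is an integral
quadratic form that these inequalities make nonnegative. Conversely every point lies in a lattice
translate of one of the triangles `0, a, b` and `a + b, b, a`, both of circumradius `‖O‖`, and a
point of a triangle is within the circumradius of one of its vertices. Computing `‖O‖` in the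
orthogonal frame `a, b - y a` gives the formula.
-/

open RealInnerProductSpace

theorem Submodule.span_pair_neg_right {R M : Type*} [Ring R] [AddCommGroup M] [Module R M]
    (a b : M) : Submodule.span R {a, -b} = Submodule.span R {a, b} := by
  rw [Submodule.span_insert, Submodule.span_insert, ← Set.neg_singleton, Submodule.span_neg]

section InnerProductSpace
variable {E : Type*} [NormedAddCommGroup E] [InnerProductSpace ℝ E]

/-- Were every point of `s` farther than `R` from `w`, then `s` would lie in the open half-space
`{x | 2 ⟪w - O, x - O⟫ < ‖w - O‖²}`, which does not contain `w`. -/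
theorem exists_dist_le_of_mem_convexHull {s : Set E} {O w : E} {R : ℝ}
    (hs : s ⊆ Metric.closedBall O R) (hw : w ∈ convexHull ℝ s) : ∃ v ∈ s, dist w v ≤ R := by
  by_contra! h
  have hhalf : s ⊆ {x | ⟪w - O, x⟫ < ‖w - O‖ ^ 2 / 2 + ⟪w - O, O⟫} := by
    intro v hv
    have hvw := h v hv
    have hvO := Metric.mem_closedBall.mp (hs hv)
    rw [dist_eq_norm] at hvw hvO
    have hsq : ‖v - O‖ ^ 2 < ‖w - v‖ ^ 2 := by nlinarith [norm_nonneg (v - O)]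
    rw [← sub_sub_sub_cancel_right w v O, norm_sub_sq_real (w - O), inner_sub_right] at hsq
    show ⟪w - O, v⟫ < _
    linarith
  have hconv : Convex ℝ {x | ⟪w - O, x⟫ < ‖w - O‖ ^ 2 / 2 + ⟪w - O, O⟫} :=
    convex_halfSpace_lt (innerₗ E (w - O)).isLinear _
  have hwh : ⟪w - O, w⟫ < ‖w - O‖ ^ 2 / 2 + ⟪w - O, O⟫ := convexHull_min hhalf hconv hw
  have hw_inner : ⟪w - O, w⟫ = ‖w - O‖ ^ 2 + ⟪w - O, O⟫ := by
    rw [← real_inner_self_eq_norm_sq, ← inner_add_right, sub_add_cancel]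
  nlinarith [sq_nonneg ‖w - O‖]

theorem smul_add_smul_mem_convexHull_triangle (a b : E) {s t : ℝ} (hs : 0 ≤ s) (ht : 0 ≤ t)
    (hst : s + t ≤ 1) : s • a + t • b ∈ convexHull ℝ {0, a, b} := by
  have := (convex_convexHull ℝ ({0, a, b} : Set E)).sum_mem (t := Finset.univ)
    (w := ![1 - s - t, s, t]) (z := ![0, a, b]) ?_ ?_ ?_
  · simpa [Fin.sum_univ_three] using this
  · intro i _
    fin_cases i <;> simp <;> linarith
  · simp [Fin.sum_univ_three]
    ring
  · intro i _
    apply subset_convexHull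
    fin_cases i <;> simp

theorem norm_sub_eq_of_two_inner_eq {O a : E} (h : 2 * ⟪O, a⟫ = ‖a‖ ^ 2) : ‖a - O‖ = ‖O‖ := by
  have hsq : ‖a - O‖ ^ 2 = ‖O‖ ^ 2 := by
    rw [norm_sub_sq_real, real_inner_comm]
    linarith
  exact (pow_left_inj₀ (norm_nonneg _) (norm_nonneg _) two_ne_zero).mp hsq

/-- The fundamental parallelogram splits into the triangles `0, a, b` and `a + b, b, a`,
both inscribed in circles of radius `‖O‖`. -/
theorem exists_mem_span_int_dist_le {a b O : E} (ha : 2 * ⟪O, a⟫ = ‖a‖ ^ 2)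
    (hb : 2 * ⟪O, b⟫ = ‖b‖ ^ 2) {w : E} (hw : w ∈ Submodule.span ℝ {a, b}) :
    ∃ l ∈ Submodule.span ℤ {a, b}, dist w l ≤ ‖O‖ := by
  set Λ := Submodule.span ℤ ({a, b} : Set E)
  have hvert : ({0, a, b} : Set E) ⊆ Λ := by
    rintro v (rfl | rfl | rfl)
    · exact Λ.zero_mem
    · exact Submodule.subset_span (by simp)
    · exact Submodule.subset_span (by simp)
  have hball : ({0, a, b} : Set E) ⊆ Metric.closedBall O ‖O‖ := by
    rintro v (rfl | rfl | rfl) <;> rw [Metric.mem_closedBall, dist_eq_norm]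
    · simp
    · exact (norm_sub_eq_of_two_inner_eq ha).le
    · exact (norm_sub_eq_of_two_inner_eq hb).le
  obtain ⟨s, t, rfl⟩ := Submodule.mem_span_pair.mp hw
  have hl₀ : (⌊s⌋ : ℝ) • a + (⌊t⌋ : ℝ) • b ∈ Λ := by
    simp only [Int.cast_smul_eq_zsmul]
    exact Λ.add_mem (Λ.smul_mem _ (Submodule.subset_span (by simp)))
      (Λ.smul_mem _ (Submodule.subset_span (by simp)))
  have hw' : s • a + t • b =
      ((⌊s⌋ : ℝ) • a + (⌊t⌋ : ℝ) • b) + (Int.fract s • a + Int.fract t • b) := by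
    simp only [Int.fract]
    module
  rcases le_total (Int.fract s + Int.fract t) 1 with hst | hst
  · obtain ⟨v, hv, hdist⟩ := exists_dist_le_of_mem_convexHull hball
      (smul_add_smul_mem_convexHull_triangle a b (Int.fract_nonneg s) (Int.fract_nonneg t) hst)
    refine ⟨_ + v, Λ.add_mem hl₀ (hvert hv), ?_⟩
    rwa [hw', dist_add_left]
  · obtain ⟨v, hv, hdist⟩ := exists_dist_le_of_mem_convexHull hball
      (smul_add_smul_mem_convexHull_triangle a b (sub_nonneg.mpr (Int.fract_lt_one s).le)
        (sub_nonneg.mpr (Int.fract_lt_one t).le) (by linarith))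
    refine ⟨_ + (a + b - v), Λ.add_mem hl₀ (Λ.sub_mem (Λ.add_mem
      (Submodule.subset_span (by simp)) (Submodule.subset_span (by simp))) (hvert hv)), ?_⟩
    rw [hw', dist_add_left]
    refine le_of_eq_of_le ?_ hdist
    rw [dist_eq_norm, dist_eq_norm, ← norm_neg]
    congr 1
    module

theorem intCast_mul_sub_one_nonneg (p : ℤ) : 0 ≤ (p : ℝ) * (p - 1) := by
  have : 0 ≤ p * (p - 1) := by rcases le_or_gt p 0 with h | h <;> nlinarith
  exact_mod_cast this

theorem quadratic_form_int_nonneg {e f g : ℝ} (hf : 0 ≤ f) (hfe : 2 * f ≤ e) (heg : e ≤ g)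
    (p q : ℤ) : 0 ≤ e * (p * (p - 1)) + g * (q * (q - 1)) + 2 * f * (p * q) := by
  have hp := intCast_mul_sub_one_nonneg p
  have hq := intCast_mul_sub_one_nonneg q
  have he : 0 ≤ e := by linarith
  rcases le_or_gt 0 (p * q) with hpq | hpq
  · have : 0 ≤ (p : ℝ) * q := by exact_mod_cast hpq
    nlinarith [mul_nonneg he hp, mul_nonneg (he.trans heg) hq, mul_nonneg hf this]
  · have hpq' : (p : ℝ) * q ≤ -1 := by exact_mod_cast (show p * q ≤ -1 by omega)
    have hs := intCast_mul_sub_one_nonneg (p + q)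
    push_cast at hs
    have hsum : 0 ≤ (p : ℝ) * (p - 1) + q * (q - 1) + p * q := by nlinarith
    nlinarith [mul_le_mul_of_nonneg_right heg hq,
      mul_le_mul_of_nonpos_right hfe (by linarith : (p : ℝ) * q ≤ 0), mul_nonneg he hsum]

/-- `‖O - (p • a + q • b)‖² - ‖O‖² = ‖a‖² p (p - 1) + ‖b‖² q (q - 1) + 2 ⟪a, b⟫ p q`. -/
theorem norm_le_dist_of_mem_span_int {a b O : E} (ha : 2 * ⟪O, a⟫ = ‖a‖ ^ 2)
    (hb : 2 * ⟪O, b⟫ = ‖b‖ ^ 2) (hab : ‖a‖ ≤ ‖b‖) (hip₀ : 0 ≤ ⟪a, b⟫)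
    (hip : 2 * ⟪a, b⟫ ≤ ‖a‖ ^ 2) {l : E} (hl : l ∈ Submodule.span ℤ {a, b}) :
    ‖O‖ ≤ dist O l := by
  obtain ⟨p, q, rfl⟩ := Submodule.mem_span_pair.mp hl
  simp only [← Int.cast_smul_eq_zsmul ℝ]
  rw [dist_eq_norm]
  refine le_of_sq_le_sq ?_ (norm_nonneg _)
  have hform := quadratic_form_int_nonneg hip₀ hip (pow_le_pow_left₀ (norm_nonneg a) hab 2) p q
  rw [norm_sub_sq_real, norm_add_sq_real, norm_smul, norm_smul, inner_add_right, inner_smul_right,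
    inner_smul_right, inner_smul_right, inner_smul_left, Real.norm_eq_abs, Real.norm_eq_abs]
  simp only [mul_pow, sq_abs, conj_trivial]
  linear_combination hform + (p : ℝ) * ha + (q : ℝ) * hb

/-- `O = a / 2 + c • (b - y • a)`, computed in the orthogonal frame `a, b - y • a` in which
`b = ‖a‖ • (y, z)`. -/
theorem exists_two_inner_eq_norm_eq {a b : E} (ha : a ≠ 0) {y z : ℝ}
    (hy : y = ⟪a, b⟫ / ‖a‖ ^ 2) (hz : z = ‖b - y • a‖ / ‖a‖) (hz₀ : z ≠ 0) :
    ∃ O : E, 2 * ⟪O, a⟫ = ‖a‖ ^ 2 ∧ 2 * ⟪O, b⟫ = ‖b‖ ^ 2 ∧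
      ‖O‖ = Real.sqrt (z ^ 2 + (z ^ 2 - y + y ^ 2) ^ 2) / (2 * z) * ‖a‖ := by
  have hN : ‖a‖ ≠ 0 := norm_ne_zero_iff.mpr ha
  set u := b - y • a with hu
  have hab : ⟪a, b⟫ = y * ‖a‖ ^ 2 := by rw [hy]; field_simp
  have hau : ⟪u, a⟫ = 0 := by
    rw [hu, inner_sub_left, inner_smul_left, real_inner_self_eq_norm_sq, real_inner_comm, hab]
    simp
  have hu_norm : ‖u‖ = z * ‖a‖ := by rw [hz]; field_simp
  have hub : ⟪u, b⟫ = z ^ 2 * ‖a‖ ^ 2 := by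
    rw [show b = u + y • a by rw [hu]; abel, inner_add_right, inner_smul_right, hau,
      real_inner_self_eq_norm_sq, hu_norm]
    ring
  have hb : ‖b‖ ^ 2 = (y ^ 2 + z ^ 2) * ‖a‖ ^ 2 := by
    rw [show b = u + y • a by rw [hu]; abel, norm_add_sq_real, inner_smul_right, hau, norm_smul,
      hu_norm, Real.norm_eq_abs]
    simp only [mul_pow, sq_abs]
    ring
  have hz_pos : 0 < z := by
    refine lt_of_le_of_ne ?_ (Ne.symm hz₀)
    rw [hz]; positivity
  refine ⟨(1 / 2 : ℝ) • a + ((y ^ 2 + z ^ 2 - y) / (2 * z ^ 2)) • u, ?_, ?_, ?_⟩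
  · rw [inner_add_left, inner_smul_left, inner_smul_left, hau, real_inner_self_eq_norm_sq]
    simp
  · rw [inner_add_left, inner_smul_left, inner_smul_left, hub, hab, hb]
    simp only [conj_trivial]
    field_simp
    ring
  · rw [← sq_eq_sq₀ (norm_nonneg _) (by positivity), norm_add_sq_real, inner_smul_left,
      inner_smul_right, real_inner_comm, hau, norm_smul, norm_smul, hu_norm]
    simp only [Real.norm_eq_abs, mul_pow, div_pow, sq_abs, mul_zero, add_zero]
    rw [Real.sq_sqrt (by positivity)]
    field_simp
    ring

end InnerProductSpace

/-- `R` is the covering radius `⨆ w, infDist w Λ` of `Λ`, and the supremum is attained. -/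
def IsCoveringRadius {X : Type*} [PseudoMetricSpace X] (Λ : Set X) (R : ℝ) : Prop :=
  (∀ w, ∃ l ∈ Λ, dist w l ≤ R) ∧ ∃ O, ∀ l ∈ Λ, R ≤ dist O l

theorem isCoveringRadius_span_int {E : Type*} [NormedAddCommGroup E] [InnerProductSpace ℝ E]
    {a b : E} (hspan : Submodule.span ℝ {a, b} = ⊤) (hli : LinearIndependent ℝ ![a, b])
    (hab : ‖a‖ ≤ ‖b‖) (hip : |⟪a, b⟫| ≤ ‖a‖ ^ 2 / 2) {y z : ℝ} (hy : y = ⟪a, b⟫ / ‖a‖ ^ 2)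
    (hz : z = ‖b - y • a‖ / ‖a‖) :
    IsCoveringRadius (Submodule.span ℤ {a, b} : Set E)
      (Real.sqrt (z ^ 2 + (z ^ 2 - |y| + y ^ 2) ^ 2) / (2 * z) * ‖a‖) := by
  wlog hip₀ : 0 ≤ ⟪a, b⟫ generalizing b y with H
  · -- `b ↦ -b` preserves the lattice, `|y|` and `z`
    have := H (b := -b) (y := -y) (by rwa [Submodule.span_pair_neg_right])
      (LinearIndependent.pair_neg_right_iff.mpr hli) (by rwa [norm_neg])
      (by rwa [inner_neg_right, abs_neg]) (by rw [hy, inner_neg_right, neg_div])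
      (by rw [hz, ← norm_neg (b - y • a), neg_smul, sub_neg_eq_add, neg_sub, neg_add_eq_sub])
      (by rw [inner_neg_right]; linarith)
    rwa [Submodule.span_pair_neg_right, abs_neg, neg_sq] at this
  have ha : a ≠ 0 := hli.ne_zero 0
  have hz₀ : z ≠ 0 := by
    rw [hz, div_ne_zero_iff, norm_ne_zero_iff, norm_ne_zero_iff, sub_ne_zero]
    refine ⟨fun h => ?_, ha⟩
    have := LinearIndependent.pair_iff.mp hli (-y) 1 (by rw [h]; module)
    exact one_ne_zero this.2
  obtain ⟨O, hOa, hOb, hO⟩ := exists_two_inner_eq_norm_eq ha hy hz hz₀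
  rw [abs_of_nonneg (hy ▸ by positivity), ← hO]
  refine ⟨fun w => exists_mem_span_int_dist_le hOa hOb (hspan ▸ Submodule.mem_top),
    O, fun l hl => norm_le_dist_of_mem_span_int hOa hOb hab hip₀ ?_ hl⟩
  linarith [(abs_le.mp hip).2]

def rankOneLattice (d n : ℕ) (v : Fin d → ℤ) : Set (Fin d → ℝ) :=
  {u | ∃ (z : Fin d → ℤ) (i : ℤ), u = fun k => (z k : ℝ) + (i : ℝ) * (v k : ℝ) / n}

noncomputable def wrapFillDistance (d : ℕ) (X : Set (Fin d → ℝ)) : ℝ :=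
  sSup {r : ℝ | ∃ u : Fin d → ℝ, (∀ k, u k ∈ Set.Icc (0 : ℝ) 1) ∧
    r = sInf {s : ℝ | ∃ x ∈ X, s = wdist (u - x)}}

section WrapAround
variable {d : ℕ}

theorem norm_toLp_eq (u : Fin d → ℝ) : ‖WithLp.toLp 2 u‖ = Real.sqrt (∑ k, u k ^ 2) := by
  simp [EuclideanSpace.norm_eq]

theorem inner_toLp_eq (u w : Fin d → ℝ) : ⟪WithLp.toLp 2 u, WithLp.toLp 2 w⟫ = ∑ k, u k * w k := by
  simp [PiLp.inner_apply, mul_comm]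

theorem norm_sq_toLp_eq (u : Fin d → ℝ) : ‖WithLp.toLp 2 u‖ ^ 2 = ∑ k, u k ^ 2 := by
  rw [norm_toLp_eq, Real.sq_sqrt (Finset.sum_nonneg fun k _ => sq_nonneg _)]

theorem nid_eq_abs_sub_round (t : ℝ) : nid t = |t - round t| :=
  le_antisymm (ciInf_le ⟨0, by rintro _ ⟨z, rfl⟩; positivity⟩ (round t))
    (le_ciInf fun z => round_le t z)

theorem wdist_nonneg (w : Fin d → ℝ) : 0 ≤ wdist w := Real.sqrt_nonneg _

theorem wdist_le (w : Fin d → ℝ) (m : Fin d → ℤ) :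
    wdist w ≤ ‖WithLp.toLp 2 (w - fun k => (m k : ℝ))‖ := by
  rw [norm_toLp_eq]
  refine Real.sqrt_le_sqrt (Finset.sum_le_sum fun k _ => ?_)
  rw [nid_eq_abs_sub_round, Pi.sub_apply, ← sq_abs (w k - m k)]
  exact pow_le_pow_left₀ (abs_nonneg _) (round_le _ _) 2

theorem wdist_eq (w : Fin d → ℝ) :
    wdist w = ‖WithLp.toLp 2 (w - fun k => (round (w k) : ℝ))‖ := by
  simp only [wdist, norm_toLp_eq, nid_eq_abs_sub_round, sq_abs, Pi.sub_apply]

theorem add_intCast_mem_rankOneLattice {n : ℕ} {v : Fin d → ℤ} {u : Fin d → ℝ}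
    (hu : u ∈ rankOneLattice d n v) (m : Fin d → ℤ) :
    (u + fun k => (m k : ℝ)) ∈ rankOneLattice d n v := by
  obtain ⟨z, i, rfl⟩ := hu
  exact ⟨z + m, i, funext fun k => by simp only [Pi.add_apply, Int.cast_add]; ring⟩

theorem mem_LHDset_iff {n : ℕ} {v : Fin d → ℤ} {δ : Fin d → ℝ} {x : Fin d → ℝ} :
    x ∈ LHDset d n v δ ↔ (x - fun k => δ k / n + 1 / (2 * n)) ∈ rankOneLattice d n v ∧
      ∀ k, x k ∈ Set.Icc (0 : ℝ) 1 := by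
  refine and_congr_left fun _ => exists₂_congr fun z i => ?_
  constructor
  · rintro rfl
    funext k
    simp only [Pi.sub_apply]
    ring
  · intro h
    funext k
    have := congrFun h k
    simp only [Pi.sub_apply] at this
    linarith

theorem wrapFillDistance_LHDset {n : ℕ} {v : Fin d → ℤ} {δ : Fin d → ℝ} {R : ℝ}
    (h : IsCoveringRadius (WithLp.toLp 2 '' rankOneLattice d n v) R) :
    wrapFillDistance d (LHDset d n v δ) = R := by
  set c : Fin d → ℝ := fun k => δ k / n + 1 / (2 * n)
  have hupper : ∀ u, ∃ x ∈ LHDset d n v δ, wdist (u - x) ≤ R := by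
    intro u
    obtain ⟨_, ⟨l, hl, rfl⟩, hdist⟩ := h.1 (WithLp.toLp 2 (u - c))
    refine ⟨fun k => Int.fract (c k + l k), mem_LHDset_iff.mpr ⟨?_, fun k =>
      ⟨Int.fract_nonneg _, (Int.fract_lt_one _).le⟩⟩, ?_⟩
    · convert add_intCast_mem_rankOneLattice hl (fun k => -⌊c k + l k⌋) using 1
      funext k
      simp only [Int.fract, Pi.sub_apply, Pi.add_apply, Int.cast_neg]
      ring
    · refine (wdist_le _ fun k => ⌊c k + l k⌋).trans (le_of_eq_of_le ?_ hdist)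
      rw [dist_eq_norm, ← WithLp.toLp_sub]
      congr 2
      funext k
      simp only [Int.fract, Pi.sub_apply]
      ring
  have hlower : ∃ u, (∀ k, u k ∈ Set.Icc (0 : ℝ) 1) ∧
      ∀ x ∈ LHDset d n v δ, R ≤ wdist (u - x) := by
    obtain ⟨O, hO⟩ := h.2
    refine ⟨fun k => Int.fract (O k + c k), fun k =>
      ⟨Int.fract_nonneg _, (Int.fract_lt_one _).le⟩, fun x hx => ?_⟩
    set w := (fun k => Int.fract (O k + c k)) - x
    have hl := add_intCast_mem_rankOneLattice (mem_LHDset_iff.mp hx).1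
      (fun k => ⌊O k + c k⌋ + round (w k))
    refine (hO _ ⟨_, hl, rfl⟩).trans (le_of_eq ?_)
    rw [wdist_eq, dist_eq_norm, ← WithLp.toLp_ofLp (p := 2) O, ← WithLp.toLp_sub]
    congr 2
    funext k
    simp only [w, Int.fract, Pi.sub_apply, Pi.add_apply, Int.cast_add]
    ring
  have hbdd : ∀ u, BddBelow {s : ℝ | ∃ x ∈ LHDset d n v δ, s = wdist (u - x)} :=
    fun u => ⟨0, by rintro _ ⟨x, -, rfl⟩; exact wdist_nonneg _⟩
  have hle : ∀ u, sInf {s : ℝ | ∃ x ∈ LHDset d n v δ, s = wdist (u - x)} ≤ R := fun u => by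
    obtain ⟨x, hx, hxR⟩ := hupper u
    exact (csInf_le (hbdd u) ⟨x, hx, rfl⟩).trans hxR
  obtain ⟨u, hu, huR⟩ := hlower
  refine IsGreatest.csSup_eq ⟨⟨u, hu, le_antisymm ?_ (hle u)⟩, ?_⟩
  · obtain ⟨x, hx, -⟩ := hupper u
    exact le_csInf ⟨_, x, hx, rfl⟩ (by rintro _ ⟨x, hx, rfl⟩; exact huR x hx)
  · rintro _ ⟨u, -, rfl⟩
    exact hle u

theorem image_toLp_intCombos (a b : Fin d → ℝ) :
    WithLp.toLp 2 '' {u : Fin d → ℝ | ∃ p q : ℤ, u = fun k => (p : ℝ) * a k + (q : ℝ) * b k} =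
      Submodule.span ℤ {WithLp.toLp 2 a, WithLp.toLp 2 b} := by
  ext w
  rw [SetLike.mem_coe, Submodule.mem_span_pair]
  constructor
  · rintro ⟨_, ⟨p, q, rfl⟩, rfl⟩
    exact ⟨p, q, by ext k; simp [← Int.cast_smul_eq_zsmul ℝ]⟩
  · rintro ⟨p, q, rfl⟩
    exact ⟨_, ⟨p, q, by ext k; simp [← Int.cast_smul_eq_zsmul ℝ]⟩, WithLp.toLp_ofLp _ _⟩

theorem span_eq_top_of_image_rankOneLattice_subset {n : ℕ} {v : Fin d → ℤ}
    {s : Set (EuclideanSpace ℝ (Fin d))}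
    (h : WithLp.toLp 2 '' rankOneLattice d n v ⊆ Submodule.span ℤ s) :
    Submodule.span ℝ s = ⊤ := by
  rw [eq_top_iff, ← (EuclideanSpace.basisFun (Fin d) ℝ).toBasis.span_eq, Submodule.span_le]
  rintro _ ⟨j, rfl⟩
  refine Submodule.span_subset_span ℤ ℝ s (h ⟨Pi.single j 1, ⟨Pi.single j 1, 0, ?_⟩, ?_⟩)
  · ext k
    by_cases hk : k = j <;> simp [hk]
  · simp

end WrapAround

theorem stmt_10_general (n : ℕ) (v δ : Fin 2 → ℤ)
    (a b : Fin 2 → ℝ)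
    (hbasis : {u : Fin 2 → ℝ | ∃ (z : Fin 2 → ℤ) (i : ℤ),
        u = fun k => (z k : ℝ) + (i : ℝ) * (v k : ℝ) / n}
      = {u : Fin 2 → ℝ | ∃ p q : ℤ, u = fun k => (p : ℝ) * a k + (q : ℝ) * b k})
    (hab : Real.sqrt (∑ k, a k ^ 2) ≤ Real.sqrt (∑ k, b k ^ 2))
    (hip : |∑ k, a k * b k| ≤ (∑ k, a k ^ 2) / 2)
    (y z : ℝ)
    (hy : y = (∑ k, a k * b k) / (∑ k, a k ^ 2))
    (hz : z = Real.sqrt (∑ k, (b k - y * a k) ^ 2) / Real.sqrt (∑ k, a k ^ 2)) :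
    sSup {r : ℝ | ∃ u : Fin 2 → ℝ, (∀ k, u k ∈ Set.Icc (0 : ℝ) 1) ∧
        r = sInf {s : ℝ | ∃ x ∈ LHDset 2 n v (fun k => (δ k : ℝ)), s = wdist (u - x)}}
      = (Real.sqrt (z ^ 2 + (z ^ 2 - |y| + y ^ 2) ^ 2) / (2 * z)) *
          Real.sqrt (∑ k, a k ^ 2) := by
  have hΛ : WithLp.toLp 2 '' rankOneLattice 2 n v =
      Submodule.span ℤ {WithLp.toLp 2 a, WithLp.toLp 2 b} := by
    rw [← image_toLp_intCombos]
    exact congrArg _ hbasis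
  have hspan := span_eq_top_of_image_rankOneLattice_subset hΛ.subset
  have hli : LinearIndependent ℝ ![WithLp.toLp 2 a, WithLp.toLp 2 b] :=
    linearIndependent_of_top_le_span_of_card_eq_finrank
      (by rw [Matrix.range_cons_cons_empty, hspan]) (by simp)
  rw [← norm_toLp_eq a, ← norm_toLp_eq b] at hab
  rw [← inner_toLp_eq, ← norm_sq_toLp_eq] at hip hy
  have hz' : z = ‖WithLp.toLp 2 b - y • WithLp.toLp 2 a‖ / ‖WithLp.toLp 2 a‖ := by
    rw [hz, ← WithLp.toLp_smul, ← WithLp.toLp_sub, norm_toLp_eq, norm_toLp_eq]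
    rfl
  rw [← norm_toLp_eq a]
  exact wrapFillDistance_LHDset (hΛ ▸ isCoveringRadius_span_int hspan hli hab hip hy hz')

/-- formula for the wrap-around fill distance of a two-dimensional
L(n,v,δ) in terms of a reduced basis (a, b) of the underlying lattice. -/
theorem stmt_10 (n : ℕ) (hn : 1 ≤ n) (v δ : Fin 2 → ℤ)
    (hco : ∀ k, IsCoprime (v k) (n : ℤ))
    (a b : Fin 2 → ℝ)
    (hbasis : {u : Fin 2 → ℝ | ∃ (z : Fin 2 → ℤ) (i : ℤ),
        u = fun k => (z k : ℝ) + (i : ℝ) * (v k : ℝ) / n}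
      = {u : Fin 2 → ℝ | ∃ p q : ℤ, u = fun k => (p : ℝ) * a k + (q : ℝ) * b k})
    (ha : 0 < Real.sqrt (∑ k, a k ^ 2))
    (hab : Real.sqrt (∑ k, a k ^ 2) ≤ Real.sqrt (∑ k, b k ^ 2))
    (hip : |∑ k, a k * b k| ≤ (∑ k, a k ^ 2) / 2)
    (y z : ℝ)
    (hy : y = (∑ k, a k * b k) / (∑ k, a k ^ 2))
    (hz : z = Real.sqrt (∑ k, (b k - y * a k) ^ 2) / Real.sqrt (∑ k, a k ^ 2)) :
    sSup {r : ℝ | ∃ u : Fin 2 → ℝ, (∀ k, u k ∈ Set.Icc (0 : ℝ) 1) ∧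
        r = sInf {s : ℝ | ∃ x ∈ LHDset 2 n v (fun k => (δ k : ℝ)), s = wdist (u - x)}}
      = (Real.sqrt (z ^ 2 + (z ^ 2 - |y| + y ^ 2) ^ 2) / (2 * z)) *
          Real.sqrt (∑ k, a k ^ 2) :=
  stmt_10_general n v δ a b hbasis hab hip y z hy hz
end

section
/- Let d ≥ 1, n ≥ 1 and s ≥ 1 be integers with s dividing n, let v ∈ ℤ^d have every entry coprime to n, and let δ ∈ ℤ^d. For j ∈ {0,…,s−1}, define the slice L_j(n,v,δ) = { z + i·v/n + δ/n + (1/(2n))·1_d : z ∈ ℤ^d, i ∈ ℤ, i ≡ j (mod s) } ∩ [0,1]^d. Then L_j(n,v,δ) = L( n/s, v, δ/s − (1/2)·1_d + (1/(2s))·1_d + (j/s)·v ), where the shift vector on the right-hand side lies in ℝ^d. -/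
open Finset

/-- The j-th slice of L(n,v,δ): points whose index i satisfies i ≡ j (mod s). -/
def LHDslice (d n s j : ℕ) (v : Fin d → ℤ) (δ : Fin d → ℝ) : Set (Fin d → ℝ) :=
  {x | (∃ (z : Fin d → ℤ) (i : ℤ), i % (s : ℤ) = (j : ℤ) ∧
          x = fun k => (z k : ℝ) + (i : ℝ) * (v k : ℝ) / n + δ k / n + 1 / (2 * n)) ∧
       ∀ k, x k ∈ Set.Icc (0 : ℝ) 1}

/-- the j-th slice of L(n,v,δ) is itself a lattice-based Latin hypercube
design: L_j(n,v,δ) = L(n/s, v, δ/s − 1_d/2 + 1_d/(2s) + j·v/s). -/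
theorem stmt_13 (d n s : ℕ) (hd : 1 ≤ d) (hn : 1 ≤ n) (hs : 1 ≤ s) (hdvd : s ∣ n)
    (v δ : Fin d → ℤ) (hco : ∀ k, IsCoprime (v k) (n : ℤ)) (j : ℕ) (hj : j < s) :
    LHDslice d n s j v (fun k => (δ k : ℝ))
      = LHDset d (n / s) v
          (fun k => (δ k : ℝ) / s - 1 / 2 + 1 / (2 * s) + (j : ℝ) * (v k : ℝ) / s) := by
  obtain ⟨m, rfl⟩ := hdvd
  have hs0 : s ≠ 0 := by omega
  have hm : m ≠ 0 := by
    rintro rfl; simp at hn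
  have hms : s * m / s = m := Nat.mul_div_cancel_left m (by omega)
  have hsR : (s : ℝ) ≠ 0 := by exact_mod_cast hs0
  have hmR : (m : ℝ) ≠ 0 := by exact_mod_cast hm
  ext x
  simp only [LHDslice, LHDset, Set.mem_setOf_eq, hms]
  constructor
  · rintro ⟨⟨z, i, hij, rfl⟩, hx⟩
    refine ⟨⟨z, i / s, ?_⟩, hx⟩
    have hi' : i = (s : ℤ) * (i / s) + j := by
      have h := Int.mul_ediv_add_emod i s
      omega
    have hi : (i : ℝ) = s * (i / s : ℤ) + j := by exact_mod_cast congrArg (fun t : ℤ => (t : ℝ)) hi'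
    funext k
    rw [hi]
    push_cast
    field_simp
    ring
  · rintro ⟨⟨z, i, rfl⟩, hx⟩
    refine ⟨⟨z, s * i + j, ?_, ?_⟩, hx⟩
    · rw [add_comm, Int.add_mul_emod_self_left]
      exact Int.emod_eq_of_lt (by positivity) (by exact_mod_cast hj)
    funext k
    push_cast
    field_simp
    ring
end

section
/- Every lattice-based Latin hypercube design is a sliced Latin hypercube design: let d ≥ 1, n ≥ 1 and s ≥ 1 be integers with s dividing n, let v ∈ ℤ^d have every entry coprime to n, and let δ ∈ ℤ^d. For j ∈ {0,…,s−1}, define the slice L_j(n,v,δ) = { z + i·v/n + δ/n + (1/(2n))·1_d : z ∈ ℤ^d, i ∈ ℤ, i ≡ j (mod s) } ∩ [0,1]^d. Then each slice L_j(n,v,δ) has exactly n/s points, and for every coordinate k ∈ {1,…,d} and every t ∈ {0,…,n/s−1}, exactly one point of L_j(n,v,δ) has its k-th coordinate in the interval [t·s/n, (t+1)·s/n). -/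
open Finset

namespace Stmt15

noncomputable def pt {d : ℕ} (n : ℕ) (v δ : Fin d → ℤ) (i : ℤ) : Fin d → ℝ :=
  fun k => (((i * v k + δ k) % (n : ℤ) : ℤ) : ℝ) / n + 1 / (2 * n)

theorem pt_congr {d : ℕ} (n : ℕ) (v δ : Fin d → ℤ) {i i' : ℤ}
    (h : i % (n : ℤ) = i' % (n : ℤ)) : pt n v δ i = pt n v δ i' := by
  funext k
  have : (i * v k + δ k) % (n : ℤ) = (i' * v k + δ k) % (n : ℤ) :=
    ((show Int.ModEq (n : ℤ) i i' from h).mul_right (v k)).add_right (δ k)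
  simp only [pt, this]

theorem mem_slice_iff {d n s j : ℕ} (hn : 1 ≤ n) (hj : j < s)
    (v δ : Fin d → ℤ) (x : Fin d → ℝ) :
    x ∈ LHDslice d n s j v (fun k => (δ k : ℝ)) ↔
      ∃ i : ℤ, i % (s : ℤ) = (j : ℤ) ∧ x = pt n v δ i := by
  have hn0 : (0 : ℝ) < n := by exact_mod_cast hn
  have hnz : (n : ℝ) ≠ 0 := ne_of_gt hn0
  have hnZ : (0 : ℤ) < (n : ℤ) := by exact_mod_cast hn
  constructor
  · rintro ⟨⟨z, i, hi, rfl⟩, hbox⟩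
    refine ⟨i, hi, funext fun k => ?_⟩
    have h0 : (0:ℝ) ≤ (z k : ℝ) + (i : ℝ) * (v k : ℝ) / n + (δ k : ℝ) / n + 1 / (2 * n) :=
      (hbox k).1
    have h1 : (z k : ℝ) + (i : ℝ) * (v k : ℝ) / n + (δ k : ℝ) / n + 1 / (2 * n) ≤ 1 :=
      (hbox k).2
    have hxk : (z k : ℝ) + (i : ℝ) * (v k : ℝ) / n + (δ k : ℝ) / n + 1 / (2 * n)
        = (2 * ((n : ℤ) * z k + (i * v k + δ k)) + 1 : ℤ) / (2 * n) := by
      field_simp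
      push_cast
      ring
    rw [hxk] at h0 h1
    rw [le_div_iff₀ (by positivity), zero_mul] at h0
    rw [div_le_one (by positivity)] at h1
    have hZ0' : (0:ℤ) ≤ 2 * ((n : ℤ) * z k + (i * v k + δ k)) + 1 := by exact_mod_cast h0
    have hZ1' : 2 * ((n : ℤ) * z k + (i * v k + δ k)) + 1 ≤ 2 * (n:ℤ) := by exact_mod_cast h1
    have hZ0 : (0:ℤ) ≤ (n : ℤ) * z k + (i * v k + δ k) := by omega
    have hZ1 : (n : ℤ) * z k + (i * v k + δ k) < (n:ℤ) := by omega
    have key : (n : ℤ) * z k + (i * v k + δ k) = (i * v k + δ k) % (n : ℤ) := by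
      rw [← Int.emod_eq_of_lt hZ0 hZ1,
        show (n:ℤ) * z k + (i * v k + δ k) = (i * v k + δ k) + (n:ℤ) * z k by ring,
        Int.add_mul_emod_self_left]
    show _ = (((i * v k + δ k) % (n : ℤ) : ℤ) : ℝ) / n + 1 / (2 * n)
    rw [hxk, key]
    push_cast
    field_simp
  · rintro ⟨i, hi, rfl⟩
    refine ⟨⟨fun k => -((i * v k + δ k) / (n : ℤ)), i, hi, funext fun k => ?_⟩, fun k => ?_⟩
    · show (((i * v k + δ k) % (n : ℤ) : ℤ) : ℝ) / n + 1 / (2 * n) = _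
      have key : (i * v k + δ k) % (n : ℤ)
          = (i * v k + δ k) + (n : ℤ) * (-((i * v k + δ k) / (n : ℤ))) := by
        rw [Int.emod_def]; ring
      rw [key]
      push_cast
      field_simp
      ring
    · set r : ℤ := (i * v k + δ k) % (n : ℤ) with hr
      have h0 : (0 : ℤ) ≤ r := Int.emod_nonneg _ (by omega)
      have h1 : r ≤ (n : ℤ) - 1 := by
        have := Int.emod_lt_of_pos (i * v k + δ k) hnZ
        omega
      have h0' : (0 : ℝ) ≤ (r : ℝ) := by exact_mod_cast h0
      have h1' : (r : ℝ) ≤ (n : ℝ) - 1 := by exact_mod_cast h1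
      constructor
      · show (0:ℝ) ≤ (r : ℝ) / n + 1 / (2 * n)
        positivity
      · show (r : ℝ) / n + 1 / (2 * n) ≤ 1
        rw [div_add_div _ _ hnz (by positivity), div_le_one (by positivity)]
        nlinarith

theorem pt_inj {d n : ℕ} (hd : 1 ≤ d) (hn : 1 ≤ n) (v δ : Fin d → ℤ)
    (hco : ∀ k, IsCoprime (v k) (n : ℤ)) {i i' : ℤ}
    (h : pt n v δ i = pt n v δ i') : i % (n : ℤ) = i' % (n : ℤ) := by
  have hn0 : (0 : ℝ) < n := by exact_mod_cast hn
  set k0 : Fin d := ⟨0, hd⟩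
  have h1 := congrFun h k0
  simp only [pt] at h1
  have h3 : (i * v k0 + δ k0) % (n : ℤ) = (i' * v k0 + δ k0) % (n : ℤ) := by
    have := add_right_cancel h1
    field_simp at this
    exact_mod_cast this
  have h4 : (n : ℤ) ∣ (i' * v k0 + δ k0) - (i * v k0 + δ k0) :=
    Int.ModEq.dvd (show Int.ModEq (n : ℤ) _ _ from h3)
  have h5 : (n : ℤ) ∣ (i' - i) * v k0 := by
    have : (i' - i) * v k0 = (i' * v k0 + δ k0) - (i * v k0 + δ k0) := by ring
    rw [this]; exact h4
  have h6 : (n : ℤ) ∣ (i' - i) := (hco k0).symm.dvd_of_dvd_mul_right h5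
  exact Int.modEq_iff_dvd.mpr h6

theorem slice_eq {d n s j : ℕ} (hd : 1 ≤ d) (hn : 1 ≤ n) (hs : 1 ≤ s) (hdvd : s ∣ n) (hj : j < s)
    (v δ : Fin d → ℤ) :
    LHDslice d n s j v (fun k => (δ k : ℝ)) =
      ↑((Finset.range (n / s)).image (fun q : ℕ => pt n v δ ((j : ℤ) + (s : ℤ) * (q : ℤ)))) := by
  have hm : s * (n / s) = n := Nat.mul_div_cancel' hdvd
  have hmpos : 1 ≤ n / s := Nat.one_le_div_iff (by omega) |>.mpr (Nat.le_of_dvd (by omega) hdvd)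
  have hM : (0 : ℤ) < ((n / s : ℕ) : ℤ) := by exact_mod_cast hmpos
  ext x
  rw [Finset.coe_image, Set.mem_image, mem_slice_iff hn hj]
  constructor
  · rintro ⟨i, hi, rfl⟩
    set M : ℤ := ((n / s : ℕ) : ℤ) with hMdef
    set qZ : ℤ := (i / (s : ℤ)) % M with hq
    have hq0 : 0 ≤ qZ := Int.emod_nonneg _ (by omega)
    have hq1 : qZ < M := Int.emod_lt_of_pos _ hM
    refine ⟨qZ.toNat, ?_, ?_⟩
    · simp only [Finset.coe_range, Set.mem_Iio]
      omega
    · refine (pt_congr n v δ ?_).symm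
      rw [Int.toNat_of_nonneg hq0]
      have e1 : i = (s : ℤ) * (i / (s : ℤ)) + (j : ℤ) := by
        conv_lhs => rw [← Int.mul_ediv_add_emod i (s : ℤ)]
        rw [hi]
      have e2 : i / (s : ℤ) = M * ((i / (s : ℤ)) / M) + qZ := by
        conv_lhs => rw [← Int.mul_ediv_add_emod (i / (s : ℤ)) M]
      refine Int.modEq_iff_dvd.mpr ⟨-((i / (s : ℤ)) / M), ?_⟩
      have hsm : (s : ℤ) * M = (n : ℤ) := by rw [hMdef]; exact_mod_cast hm
      linear_combination -e1 - (s : ℤ) * e2 - ((i / (s : ℤ)) / M) * hsm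
  · rintro ⟨q, hq, rfl⟩
    refine ⟨(j : ℤ) + (s : ℤ) * (q : ℤ), ?_, rfl⟩
    rw [Int.add_mul_emod_self_left, Int.emod_eq_of_lt (by positivity) (by exact_mod_cast hj)]

theorem slice_ncard {d n s j : ℕ} (hd : 1 ≤ d) (hn : 1 ≤ n) (hs : 1 ≤ s) (hdvd : s ∣ n)
    (hj : j < s) (v δ : Fin d → ℤ) (hco : ∀ k, IsCoprime (v k) (n : ℤ)) :
    (LHDslice d n s j v (fun k => (δ k : ℝ))).ncard = n / s := by
  rw [slice_eq hd hn hs hdvd hj v δ, Set.ncard_coe_finset,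
    Finset.card_image_of_injOn, Finset.card_range]
  intro q hq q' hq' h
  simp only [Finset.coe_range, Set.mem_Iio] at hq hq'
  have h1 := pt_inj hd hn v δ hco h
  have h2 : (n : ℤ) ∣ ((j : ℤ) + s * q') - ((j : ℤ) + s * q) :=
    (show Int.ModEq (n : ℤ) _ _ from h1).dvd
  have hsm : (s : ℤ) * ((n / s : ℕ) : ℤ) = (n : ℤ) := by exact_mod_cast Nat.mul_div_cancel' hdvd
  have h3 : (s : ℤ) * ((n / s : ℕ) : ℤ) ∣ (s : ℤ) * ((q' : ℤ) - q) := by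
    rw [hsm]
    have : ((j : ℤ) + s * q') - ((j : ℤ) + s * q) = (s : ℤ) * ((q' : ℤ) - q) := by ring
    rw [← this]; exact h2
  have h4 : ((n / s : ℕ) : ℤ) ∣ (q' : ℤ) - q :=
    (mul_dvd_mul_iff_left (show (s : ℤ) ≠ 0 by exact_mod_cast by omega)).mp h3
  have h5 : (q' : ℤ) - q = 0 := Int.eq_zero_of_abs_lt_dvd h4 (by rw [abs_lt]; omega)
  omega

theorem emod_decomp {s m : ℤ} (hs : 0 < s) (hm : 0 < m) (A : ℤ) :
    A % (s * m) = A % s + s * ((A / s) % m) := by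
  conv_lhs => rw [← Int.mul_ediv_add_emod A s]
  conv_lhs => rw [← Int.mul_ediv_add_emod (A / s) m]
  have h1 : s * (m * ((A / s) / m) + (A / s) % m) + A % s
      = (A % s + s * ((A / s) % m)) + (s * m) * ((A / s) / m) := by ring
  rw [h1, Int.add_mul_emod_self_left]
  have e1 : 0 ≤ A % s := Int.emod_nonneg A (ne_of_gt hs)
  have e2 : A % s < s := Int.emod_lt_of_pos A hs
  have e3 : 0 ≤ (A / s) % m := Int.emod_nonneg _ (ne_of_gt hm)
  have e4 : (A / s) % m < m := Int.emod_lt_of_pos _ hm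
  apply Int.emod_eq_of_lt
  · have := mul_nonneg (le_of_lt hs) e3
    linarith
  · nlinarith

theorem cond_iff {d n s j : ℕ} (hn : 1 ≤ n) (hs : 1 ≤ s) (hdvd : s ∣ n) (hj : j < s)
    (v δ : Fin d → ℤ) (k : Fin d) (t q : ℕ) (ht : t < n / s) :
    pt n v δ ((j : ℤ) + (s : ℤ) * q) k ∈
        Set.Ico (((t : ℝ) * s) / n) ((((t : ℝ) + 1) * s) / n) ↔
      ((((j : ℤ) * v k + δ k) / (s : ℤ)) + (q : ℤ) * v k) % ((n / s : ℕ) : ℤ) = (t : ℤ) := by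
  have hn0 : (0 : ℝ) < n := by exact_mod_cast hn
  have hsZ : (0 : ℤ) < (s : ℤ) := by exact_mod_cast hs
  have hmpos : 1 ≤ n / s := Nat.one_le_div_iff (by omega) |>.mpr (Nat.le_of_dvd (by omega) hdvd)
  have hMZ : (0 : ℤ) < ((n / s : ℕ) : ℤ) := by exact_mod_cast hmpos
  have hsm : (s : ℤ) * ((n / s : ℕ) : ℤ) = (n : ℤ) := by exact_mod_cast Nat.mul_div_cancel' hdvd
  set M : ℤ := ((n / s : ℕ) : ℤ) with hMdef
  set c : ℤ := (j : ℤ) * v k + δ k with hc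
  set A : ℤ := ((j : ℤ) + (s : ℤ) * q) * v k + δ k with hA
  set r : ℤ := A % (n : ℤ) with hrdef
  set u : ℤ := (c / (s : ℤ) + (q : ℤ) * v k) % M with hu
  -- decomposition of r
  have hdec : r = c % (s : ℤ) + (s : ℤ) * u := by
    rw [hrdef, ← hsm, emod_decomp hsZ hMZ]
    congr 1
    · rw [hA, show ((j : ℤ) + (s : ℤ) * q) * v k + δ k = c + ((q : ℤ) * v k) * (s:ℤ) by rw [hc]; ring,
        Int.add_mul_emod_self_right]
    · rw [hA, show ((j : ℤ) + (s : ℤ) * q) * v k + δ k = c + ((q : ℤ) * v k) * (s:ℤ) by rw [hc]; ring,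
        Int.add_mul_ediv_right _ _ (ne_of_gt hsZ)]
  have hr0 : 0 ≤ r := Int.emod_nonneg _ (by omega)
  have hrn : r < (n : ℤ) := Int.emod_lt_of_pos _ (by exact_mod_cast hn)
  have hc0 : 0 ≤ c % (s : ℤ) := Int.emod_nonneg _ (ne_of_gt hsZ)
  have hc1 : c % (s : ℤ) < (s : ℤ) := Int.emod_lt_of_pos _ hsZ
  have hu0 : 0 ≤ u := Int.emod_nonneg _ (ne_of_gt hMZ)
  have hu1 : u < M := Int.emod_lt_of_pos _ hMZ
  have htZ : (t : ℤ) < M := by rw [hMdef]; exact_mod_cast ht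
  -- real part: pt value
  have hpt : pt n v δ ((j : ℤ) + (s : ℤ) * q) k = ((2 * r + 1 : ℤ) : ℝ) / (2 * n) := by
    simp only [pt, ← hA, ← hrdef]
    push_cast
    field_simp
  -- interval membership iff integer inequalities
  have hIco : pt n v δ ((j : ℤ) + (s : ℤ) * q) k ∈
      Set.Ico (((t : ℝ) * s) / n) ((((t : ℝ) + 1) * s) / n) ↔
      ((t : ℤ) * s ≤ r ∧ r < (t : ℤ) * s + s) := by
    rw [hpt, Set.mem_Ico]
    have e1 : ((t : ℝ) * s) / n = ((2 * ((t : ℤ) * s) : ℤ) : ℝ) / (2 * n) := by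
      push_cast; field_simp
    have e2 : (((t : ℝ) + 1) * s) / n = ((2 * ((t : ℤ) * s) + 2 * s : ℤ) : ℝ) / (2 * n) := by
      push_cast; field_simp
    rw [e1, e2, div_le_div_iff_of_pos_right (by positivity : (0:ℝ) < 2 * n),
      div_lt_div_iff_of_pos_right (by positivity : (0:ℝ) < 2 * n), Int.cast_le, Int.cast_lt]
    constructor
    · rintro ⟨h1, h2⟩
      constructor
      · have : (t : ℤ) * s < r + 1 := by linarith
        omega
      · have : 2 * r + 2 ≤ 2 * ((t : ℤ) * s) + 2 * s := by omega
        linarith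
    · rintro ⟨h1, h2⟩
      exact ⟨by linarith, by linarith⟩
  rw [hIco]
  constructor
  · rintro ⟨h1, h2⟩
    -- r / s = t and r / s = u
    have ha : r / (s : ℤ) = (t : ℤ) := by
      rw [show r = (r - (t : ℤ) * s) + (t : ℤ) * (s : ℤ) by ring,
        Int.add_mul_ediv_right _ _ (ne_of_gt hsZ),
        Int.ediv_eq_zero_of_lt (by linarith) (by linarith), zero_add]
    have hb : r / (s : ℤ) = u := by
      rw [show r = c % (s : ℤ) + u * (s : ℤ) by rw [hdec]; ring,
        Int.add_mul_ediv_right _ _ (ne_of_gt hsZ),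
        Int.ediv_eq_zero_of_lt hc0 hc1, zero_add]
    rw [← hb]; exact ha
  · intro hut
    have : u = (t : ℤ) := hut
    constructor
    · rw [hdec, this]; linarith
    · rw [hdec, this]; linarith

theorem exists_unique_q (m : ℕ) (hm : 1 ≤ m) (w e t : ℤ)
    (hco : IsCoprime w ((m : ℕ) : ℤ)) (ht0 : 0 ≤ t) (ht : t < (m : ℤ)) :
    ∃! q : ℕ, q < m ∧ (e + (q : ℤ) * w) % ((m : ℕ) : ℤ) = t := by
  have hM : (0 : ℤ) < ((m : ℕ) : ℤ) := by exact_mod_cast hm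
  obtain ⟨a, b, hab⟩ := hco
  set q0 : ℤ := ((t - e) * a) % ((m : ℕ) : ℤ) with hq0def
  have hq00 : 0 ≤ q0 := Int.emod_nonneg _ (ne_of_gt hM)
  have hq01 : q0 < ((m : ℕ) : ℤ) := Int.emod_lt_of_pos _ hM
  have hval : (e + q0 * w) % ((m : ℕ) : ℤ) = t := by
    have h1 : Int.ModEq ((m : ℕ) : ℤ) q0 ((t - e) * a) :=
      Int.emod_emod_of_dvd _ dvd_rfl
    have h2 : Int.ModEq ((m : ℕ) : ℤ) (e + q0 * w) (e + ((t - e) * a) * w) :=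
      (h1.mul_right w).add_left e
    have h3 : Int.ModEq ((m : ℕ) : ℤ) (e + ((t - e) * a) * w) t :=
      Int.modEq_iff_dvd.mpr ⟨(t - e) * b, by linear_combination (e - t) * hab⟩
    have h4 := h2.trans h3
    rw [show (e + q0 * w) % ((m : ℕ) : ℤ) = t % ((m : ℕ) : ℤ) from h4,
      Int.emod_eq_of_lt ht0 ht]
  refine ⟨q0.toNat, ⟨by omega, by rw [Int.toNat_of_nonneg hq00]; exact hval⟩, ?_⟩
  rintro q ⟨hqm, hqe⟩
  have hdvd : ((m : ℕ) : ℤ) ∣ ((q : ℤ) - q0.toNat) * w := by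
    have h5 : (e + (q : ℤ) * w) % ((m : ℕ) : ℤ) = (e + (q0.toNat : ℤ) * w) % ((m : ℕ) : ℤ) := by
      rw [hqe, Int.toNat_of_nonneg hq00, hval]
    have h6 := (show Int.ModEq ((m : ℕ) : ℤ) _ _ from h5.symm).dvd
    have : (e + (q : ℤ) * w) - (e + (q0.toNat : ℤ) * w) = ((q : ℤ) - q0.toNat) * w := by ring
    rw [← this]; exact h6
  have h7 : ((m : ℕ) : ℤ) ∣ ((q : ℤ) - q0.toNat) :=
    (IsCoprime.symm ⟨a, b, hab⟩).dvd_of_dvd_mul_right hdvd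
  have h8 : (q : ℤ) - q0.toNat = 0 := Int.eq_zero_of_abs_lt_dvd h7 (by rw [abs_lt]; omega)
  omega

end Stmt15

/-- each slice L_j(n,v,δ) has exactly n/s points, and for every
coordinate k and every t ∈ {0,…,n/s−1} exactly one point of the slice has its k-th
coordinate in [t·s/n, (t+1)·s/n). -/
theorem stmt_15 (d n s : ℕ) (hd : 1 ≤ d) (hn : 1 ≤ n) (hs : 1 ≤ s) (hdvd : s ∣ n)
    (v δ : Fin d → ℤ) (hco : ∀ k, IsCoprime (v k) (n : ℤ)) (j : ℕ) (hj : j < s) :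
    (LHDslice d n s j v (fun k => (δ k : ℝ))).ncard = n / s ∧
    ∀ k : Fin d, ∀ t : ℕ, t < n / s →
      ∃! x : Fin d → ℝ, x ∈ LHDslice d n s j v (fun k => (δ k : ℝ)) ∧
        x k ∈ Set.Ico (((t : ℝ) * s) / n) ((((t : ℝ) + 1) * s) / n) := by

  have hmpos : 1 ≤ n / s := Nat.one_le_div_iff (by omega) |>.mpr (Nat.le_of_dvd (by omega) hdvd)
  refine ⟨Stmt15.slice_ncard hd hn hs hdvd hj v δ hco, ?_⟩
  intro k t ht
  have hsm : (s : ℤ) * ((n / s : ℕ) : ℤ) = (n : ℤ) := by exact_mod_cast Nat.mul_div_cancel' hdvd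
  have hcoM : IsCoprime (v k) ((n / s : ℕ) : ℤ) :=
    (hco k).of_isCoprime_of_dvd_right ⟨(s : ℤ), by rw [← hsm]; ring⟩
  obtain ⟨q0, ⟨hq0m, hq0e⟩, huniq⟩ :=
    Stmt15.exists_unique_q (n / s) hmpos (v k) (((j : ℤ) * v k + δ k) / (s : ℤ)) (t : ℤ)
      hcoM (by exact_mod_cast Nat.zero_le t) (by exact_mod_cast ht)
  refine ⟨Stmt15.pt n v δ ((j : ℤ) + (s : ℤ) * q0), ⟨?_, ?_⟩, ?_⟩
  · rw [Stmt15.slice_eq hd hn hs hdvd hj v δ]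
    exact Finset.mem_coe.mpr (Finset.mem_image.mpr ⟨q0, Finset.mem_range.mpr hq0m, rfl⟩)
  · exact (Stmt15.cond_iff hn hs hdvd hj v δ k t q0 ht).mpr hq0e
  · rintro y ⟨hy, hyc⟩
    rw [Stmt15.slice_eq hd hn hs hdvd hj v δ] at hy
    obtain ⟨q', hq', rfl⟩ := Finset.mem_image.mp (Finset.mem_coe.mp hy)
    have hq'm := Finset.mem_range.mp hq'
    have hcond := (Stmt15.cond_iff hn hs hdvd hj v δ k t q' ht).mp hyc
    rw [huniq q' ⟨hq'm, hcond⟩]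
end

section
/- Let d ≥ 1 and m ≤ n be positive integers, let v ∈ ℤ^d have every entry coprime to m, let δ ∈ ℤ^d, and let l = (l₁,…,l_d) with each l_k ∈ {0, 1/n, 2/n, …, (n−m)/n} (so that n·l ∈ ℤ^d). Then R(n,m,v,δ) ∩ Π_{k=1}^d [l_k, l_k + m/n] = { (m/n)·x + l : x ∈ L(m, v, δ − n·l) }. -/
open Finset

/-- Regularly repeated lattice-based Latin hypercube design
R(n,m,v,δ) = { (m/n)·z + i·v/n + δ/n + 1_d/(2n) : z ∈ ℤ^d, i ∈ ℤ } ∩ [0,1]^d. -/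
def RLHDset (d n m : ℕ) (v δ : Fin d → ℤ) : Set (Fin d → ℝ) :=
  {x | (∃ (z : Fin d → ℤ) (i : ℤ),
          x = fun k => (m : ℝ) * (z k : ℝ) / n + (i : ℝ) * (v k : ℝ) / n + (δ k : ℝ) / n + 1 / (2 * n)) ∧
       ∀ k, x k ∈ Set.Icc (0 : ℝ) 1}

/-! The map `x ↦ (m/n)·x + l` sends the generator `(z, i)` of `L(m, v, δ - n·l)` to the generator
`(z, i)` of `R(n, m, v, δ)`, and maps `[0,1]^d` onto the box `Π_k [l_k, l_k + m/n]`, which lies in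
`[0,1]^d` because `n·l_k ≤ n - m`. Hence it maps `L(m, v, δ - n·l)` bijectively onto the part of
`R(n, m, v, δ)` inside the box. -/

section Rescaling

variable {ι : Type*} {c : ℝ}

lemma affine_mem_Icc_iff (hc : 0 < c) (l t : ℝ) :
    c * t + l ∈ Set.Icc l (l + c) ↔ t ∈ Set.Icc 0 1 := by
  simp only [Set.mem_Icc, le_add_iff_nonneg_left, add_comm l, add_le_add_iff_right,
    mul_nonneg_iff_of_pos_left hc, mul_le_iff_le_one_right hc]

lemma affine_eq_affine_iff (hc : c ≠ 0) (l x y : ι → ℝ) :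
    ((fun k => c * x k + l k) = fun k => c * y k + l k) ↔ x = y := by
  simp only [funext_iff, add_left_inj, mul_right_inj' hc]

lemma exists_mem_affine_eq_iff (hc : c ≠ 0) (S : Set (ι → ℝ)) (l x : ι → ℝ) :
    (∃ y ∈ S, (fun k => c * x k + l k) = fun k => c * y k + l k) ↔ x ∈ S := by
  simp only [affine_eq_affine_iff hc, exists_eq_right']

lemma rescale_lattice_coord {m n : ℝ} (hm : m ≠ 0) (hn : n ≠ 0) (z i v δ l : ℝ) :
    m / n * (z + i * v / m + (δ - n * l) / m + 1 / (2 * m)) + l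
      = m * z / n + i * v / n + δ / n + 1 / (2 * n) := by
  field_simp
  ring

lemma Icc_div_add_div_subset_unitInterval {a m n : ℕ} (hmn : m ≤ n) (ha : a ≤ n - m) :
    Set.Icc ((a : ℝ) / n) (a / n + m / n) ⊆ Set.Icc 0 1 := by
  refine Set.Icc_subset_Icc (by positivity) ?_
  rw [← add_div]
  exact div_le_one_of_le₀ (by exact_mod_cast (by omega : a + m ≤ n)) n.cast_nonneg

end Rescaling

theorem stmt_16_general (d n m : ℕ) (hm : 1 ≤ m) (hmn : m ≤ n) (v δ : Fin d → ℤ)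
    (l : Fin d → ℝ) (hl : ∀ k, ∃ a : ℕ, a ≤ n - m ∧ l k = (a : ℝ) / n) :
    RLHDset d n m v δ ∩ {x : Fin d → ℝ | ∀ k, x k ∈ Set.Icc (l k) (l k + (m : ℝ) / n)}
      = {y : Fin d → ℝ | ∃ x ∈ LHDset d m v (fun k => (δ k : ℝ) - (n : ℝ) * l k),
          y = fun k => ((m : ℝ) / n) * x k + l k} := by
  have hm0 : (0 : ℝ) < m := by exact_mod_cast hm
  have hn0 : (0 : ℝ) < n := by exact_mod_cast hm.trans hmn
  have hc : (0 : ℝ) < m / n := div_pos hm0 hn0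
  have hbox : ∀ k, Set.Icc (l k) (l k + (m : ℝ) / n) ⊆ Set.Icc 0 1 := fun k => by
    obtain ⟨a, ha, hlk⟩ := hl k
    exact hlk ▸ Icc_div_add_div_subset_unitInterval hmn ha
  ext y
  obtain ⟨x, rfl⟩ : ∃ x : Fin d → ℝ, y = fun k => (m / n : ℝ) * x k + l k :=
    ⟨fun k => (y k - l k) / (m / n), by funext k; field_simp; ring⟩
  have hlattice : ∀ (z : Fin d → ℤ) (i : ℤ),
      ((fun k => (m / n : ℝ) * x k + l k) =
        fun k => (m : ℝ) * z k / n + i * v k / n + δ k / n + 1 / (2 * n)) ↔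
      x = fun k => (z k : ℝ) + i * v k / m + (δ k - n * l k) / m + 1 / (2 * m) := fun z i => by
    rw [← affine_eq_affine_iff hc.ne' l x]
    simp only [rescale_lattice_coord hm0.ne' hn0.ne']
  simp only [Set.mem_ofPred_eq, exists_mem_affine_eq_iff hc.ne']
  simp only [Set.mem_inter_iff, RLHDset, LHDset, Set.mem_ofPred_eq, affine_mem_Icc_iff hc, hlattice]
  exact ⟨fun ⟨⟨hzi, _⟩, hx⟩ => ⟨hzi, hx⟩, fun ⟨hzi, hx⟩ =>
    ⟨⟨hzi, fun k => hbox k ((affine_mem_Icc_iff hc _ _).2 (hx k))⟩, hx⟩⟩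

/-- the portion of R(n,m,v,δ) inside the box Π_k [l_k, l_k + m/n] is the
rescaled translated design (m/n)·L(m,v,δ−n·l) + l. -/
theorem stmt_16 (d n m : ℕ) (hd : 1 ≤ d) (hm : 1 ≤ m) (hmn : m ≤ n) (v δ : Fin d → ℤ)
    (hco : ∀ k, IsCoprime (v k) (m : ℤ))
    (l : Fin d → ℝ) (hl : ∀ k, ∃ a : ℕ, a ≤ n - m ∧ l k = (a : ℝ) / n) :
    RLHDset d n m v δ ∩ {x : Fin d → ℝ | ∀ k, x k ∈ Set.Icc (l k) (l k + (m : ℝ) / n)}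
      = {y : Fin d → ℝ | ∃ x ∈ LHDset d m v (fun k => (δ k : ℝ) - (n : ℝ) * l k),
          y = fun k => ((m : ℝ) / n) * x k + l k} :=
  stmt_16_general d n m hm hmn v δ l hl
end

section
/- Let d ≥ 1 and m ≤ n be positive integers, let v ∈ ℤ^d have every entry coprime to m, let δ ∈ ℤ^d, and let l = (l₁,…,l_d) with each l_k ∈ {0, 1/n, 2/n, …, (n−m)/n}. Then R(n,m,v,δ) ∩ Π_{k=1}^d [l_k, l_k + m/n] is an m-point Latin hypercube design in the hypercube Π_{k=1}^d [l_k, l_k + m/n]: it contains exactly m points, and for every coordinate k ∈ {1,…,d} the map sending a point of this intersection to its k-th coordinate is a bijection onto { l_k + (2t+1)/(2n) : t = 0, 1, …, m−1 }. -/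
open Finset

/-!
Every point of `R(n,m,v,δ)` has the form `((c_k + 1/2) / n)_k` with
`c_k ≡ i v_k + δ_k (mod m)` for one line index `i`, and it lies in the box
`Π_k [a_k / n, (a_k + m) / n]` iff `a_k ≤ c_k < a_k + m` for all `k`. These conditions force
`c_k = a_k + ((i v_k + δ_k - a_k) mod m)`, so the points of `R` in the box are indexed by
`i ∈ ℤ/m`. Since `v_k` is a unit mod `m`, the offset `i ↦ (i v_k + δ_k - a_k) mod m` is a
bijection of `ℤ/m` onto `{0, …, m - 1}`, which gives both the Latin property in coordinate `k`
and, via any one coordinate, the count `m`.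
-/

open Set Function

theorem ZMod.intCast_eq_and_mem_Ico_iff {m : ℕ} [NeZero m] {a c : ℤ} {y : ZMod m} :
    (c : ZMod m) = y ∧ c ∈ Set.Ico a (a + m) ↔ c = a + ((y - a).val : ℤ) := by
  constructor
  · rintro ⟨rfl, hac, hcm⟩
    have hcast : ((c : ZMod m) - a) = ((c - a : ℤ) : ZMod m) := by push_cast; ring
    rw [hcast, ZMod.val_intCast, Int.emod_eq_of_lt (by omega) (by omega)]
    ring
  · rintro rfl
    have hlt : (y - a).val < m := ZMod.val_lt _
    refine ⟨?_, by omega, by omega⟩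
    push_cast
    rw [ZMod.natCast_zmod_val]
    ring

theorem ZMod.range_val {m : ℕ} [NeZero m] : range (ZMod.val : ZMod m → ℕ) = Set.Iio m := by
  ext t
  exact ⟨by rintro ⟨i, rfl⟩; exact ZMod.val_lt i, fun ht => ⟨t, ZMod.val_cast_of_lt ht⟩⟩

namespace LatinHypercube

variable {d n m : ℕ}

theorem half_add_div_mem_Icc_iff (hn : 0 < n) (a b c : ℤ) :
    ((c : ℝ) + 1 / 2) / n ∈ Icc ((a : ℝ) / n) ((b : ℝ) / n) ↔ c ∈ Set.Ico a b := by
  have hn' : (0 : ℝ) < n := by exact_mod_cast hn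
  rw [Set.mem_Icc, div_le_div_iff_of_pos_right hn', div_le_div_iff_of_pos_right hn']
  constructor
  · rintro ⟨hac, hcb⟩
    have hac' : a < c + 1 := by exact_mod_cast (by linarith : (a : ℝ) < c + 1)
    have hcb' : c < b := by exact_mod_cast (by linarith : (c : ℝ) < b)
    exact ⟨by omega, hcb'⟩
  · rintro ⟨hac, hcb⟩
    have hac' : (a : ℝ) ≤ c := by exact_mod_cast hac
    have hcb' : (c : ℝ) + 1 ≤ b := by exact_mod_cast hcb
    constructor <;> linarith

noncomputable def gridPoint (n : ℕ) (c : Fin d → ℤ) : Fin d → ℝ :=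
  fun k => ((c k : ℝ) + 1 / 2) / n

theorem gridPoint_mem_box_iff (hn : 0 < n) (a : Fin d → ℕ) (c : Fin d → ℤ) :
    gridPoint n c ∈
        {x : Fin d → ℝ | ∀ k, x k ∈ Icc ((a k : ℝ) / n) ((a k : ℝ) / n + (m : ℝ) / n)} ↔
      ∀ k, c k ∈ Set.Ico (a k : ℤ) (a k + m) := by
  refine forall_congr' fun k => ?_
  rw [← add_div, ← half_add_div_mem_Icc_iff hn]
  push_cast
  rfl

theorem box_subset_unitCube (hn : 0 < n) {a : Fin d → ℕ} (ha : ∀ k, a k + m ≤ n) :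
    {x : Fin d → ℝ | ∀ k, x k ∈ Icc ((a k : ℝ) / n) ((a k : ℝ) / n + (m : ℝ) / n)} ⊆
      {x | ∀ k, x k ∈ Icc (0 : ℝ) 1} := by
  have hn' : (0 : ℝ) < n := by exact_mod_cast hn
  intro x hx k
  have hak : (a k : ℝ) + m ≤ n := by exact_mod_cast ha k
  refine ⟨(div_nonneg (Nat.cast_nonneg _) hn'.le).trans (hx k).1, (hx k).2.trans ?_⟩
  rw [← add_div, div_le_one hn']
  exact hak

theorem RLHDset_eq (v δ : Fin d → ℤ) :
    RLHDset d n m v δ =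
      {x | ∃ (c : Fin d → ℤ) (i : ZMod m),
          x = gridPoint n c ∧ ∀ k, (c k : ZMod m) = i * v k + δ k} ∩
        {x | ∀ k, x k ∈ Icc (0 : ℝ) 1} := by
  ext x
  refine and_congr_left' ⟨?_, ?_⟩
  · rintro ⟨z, i, rfl⟩
    refine ⟨fun k => m * z k + i * v k + δ k, i, ?_, fun k => by simp⟩
    funext k
    simp only [gridPoint]
    push_cast
    ring
  · rintro ⟨c, i, rfl, hc⟩
    obtain ⟨j, rfl⟩ := ZMod.intCast_surjective i
    have hdvd : ∀ k, (m : ℤ) ∣ c k - j * v k - δ k := fun k =>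
      (ZMod.intCast_zmod_eq_zero_iff_dvd _ m).1 (by push_cast; rw [hc k]; ring)
    choose z hz using hdvd
    refine ⟨z, j, funext fun k => ?_⟩
    have hck : (c k : ℝ) = m * z k + j * v k + δ k := by
      exact_mod_cast (by linarith [hz k] : c k = m * z k + j * v k + δ k)
    simp only [gridPoint, hck]
    ring

def boxOffset (m : ℕ) (v δ : Fin d → ℤ) (a : Fin d → ℕ) (i : ZMod m) (k : Fin d) : ℕ :=
  (i * (v k : ZMod m) + (δ k : ZMod m) - (a k : ZMod m)).val

noncomputable def boxPoint (n m : ℕ) (v δ : Fin d → ℤ) (a : Fin d → ℕ) (i : ZMod m) :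
    Fin d → ℝ :=
  gridPoint n fun k => a k + boxOffset m v δ a i k

variable {v δ : Fin d → ℤ} {a : Fin d → ℕ}

theorem RLHDset_inter_box_eq_range [NeZero m] (hn : 0 < n) (ha : ∀ k, a k + m ≤ n) :
    RLHDset d n m v δ ∩
        {x : Fin d → ℝ | ∀ k, x k ∈ Icc ((a k : ℝ) / n) ((a k : ℝ) / n + (m : ℝ) / n)} =
      range (boxPoint n m v δ a) := by
  rw [RLHDset_eq, inter_assoc, inter_eq_right.2 (box_subset_unitCube hn ha)]
  ext x
  constructor
  · rintro ⟨⟨c, i, rfl, hc⟩, hbox⟩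
    rw [gridPoint_mem_box_iff hn] at hbox
    refine ⟨i, congrArg (gridPoint n) (funext fun k => ?_)⟩
    exact ((ZMod.intCast_eq_and_mem_Ico_iff.1 ⟨hc k, hbox k⟩).trans (by push_cast; rfl)).symm
  · rintro ⟨i, rfl⟩
    have hcell := fun k => ZMod.intCast_eq_and_mem_Ico_iff (a := a k)
      (c := a k + boxOffset m v δ a i k) (y := i * (v k : ZMod m) + (δ k : ZMod m))
    refine ⟨⟨_, i, rfl, fun k => ((hcell k).2 (by simp [boxOffset])).1⟩, ?_⟩
    exact (gridPoint_mem_box_iff hn a _).2 fun k => ((hcell k).2 (by simp [boxOffset])).2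

theorem boxPoint_apply (i : ZMod m) (k : Fin d) :
    boxPoint n m v δ a i k =
      (a k : ℝ) / n + (2 * (boxOffset m v δ a i k : ℝ) + 1) / (2 * n) := by
  simp only [boxPoint, gridPoint]
  push_cast
  ring

theorem injective_boxOffset_and_range [NeZero m] {k : Fin d} (hv : IsCoprime (v k) (m : ℤ)) :
    Injective (boxOffset m v δ a · k) ∧ range (boxOffset m v δ a · k) = Set.Iio m := by
  let e : ZMod m ≃ ZMod m :=
    (Units.mulRight (ZMod.unitOfIsCoprime (v k) hv)).trans
      (Equiv.addRight ((δ k : ZMod m) - (a k : ZMod m)))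
  have he : (boxOffset m v δ a · k) = ZMod.val ∘ e := by
    funext i
    simp [e, boxOffset, add_sub_assoc]
  rw [he, EquivLike.range_comp, ZMod.range_val]
  exact ⟨ZMod.val_injective m |>.comp e.injective, rfl⟩

theorem injective_boxPoint_apply_and_range [NeZero m] (hn : 0 < n) {k : Fin d}
    (hv : IsCoprime (v k) (m : ℤ)) :
    Injective (boxPoint n m v δ a · k) ∧ range (boxPoint n m v δ a · k) =
      {r : ℝ | ∃ t : ℕ, t < m ∧ r = (a k : ℝ) / n + (2 * (t : ℝ) + 1) / (2 * n)} := by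
  have hn' : (0 : ℝ) < n := by exact_mod_cast hn
  set f : ℕ → ℝ := fun t => (a k : ℝ) / n + (2 * (t : ℝ) + 1) / (2 * n)
  have hf : Injective f := fun s t hst => by
    simp only [f, add_right_inj, div_left_inj' (by positivity : (2 * n : ℝ) ≠ 0)] at hst
    exact_mod_cast (by linarith : (s : ℝ) = t)
  have hcomp : (boxPoint n m v δ a · k) = f ∘ (boxOffset m v δ a · k) :=
    funext fun i => boxPoint_apply i k
  obtain ⟨hinj, hrange⟩ := injective_boxOffset_and_range (δ := δ) (a := a) hv
  rw [hcomp, range_comp, hrange]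
  refine ⟨hf.comp hinj, ?_⟩
  ext r
  simp [f, eq_comm]

end LatinHypercube

open LatinHypercube

/-- the portion of R(n,m,v,δ) inside the box Π_k [l_k, l_k + m/n] is an
m-point Latin hypercube design in that box. -/
theorem stmt_17 (d n m : ℕ) (hd : 1 ≤ d) (hm : 1 ≤ m) (hmn : m ≤ n) (v δ : Fin d → ℤ)
    (hco : ∀ k, IsCoprime (v k) (m : ℤ))
    (l : Fin d → ℝ) (hl : ∀ k, ∃ a : ℕ, a ≤ n - m ∧ l k = (a : ℝ) / n) :
    (RLHDset d n m v δ ∩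
        {x : Fin d → ℝ | ∀ k, x k ∈ Set.Icc (l k) (l k + (m : ℝ) / n)}).ncard = m ∧
    ∀ k : Fin d, Set.BijOn (fun x : Fin d → ℝ => x k)
      (RLHDset d n m v δ ∩ {x : Fin d → ℝ | ∀ k, x k ∈ Set.Icc (l k) (l k + (m : ℝ) / n)})
      {r : ℝ | ∃ t : ℕ, t < m ∧ r = l k + (2 * (t : ℝ) + 1) / (2 * n)} := by
  have : NeZero m := ⟨by omega⟩
  have hn : 0 < n := by omega
  choose a ha hl using hl
  simp only [hl]
  rw [RLHDset_inter_box_eq_range hn fun k => by have := ha k; omega]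
  have hcoord k := injective_boxPoint_apply_and_range (δ := δ) (a := a) hn (hco k)
  refine ⟨?_, fun k => ?_⟩
  · have hinj := (hcoord ⟨0, hd⟩).1.of_comp (f := fun x : Fin d → ℝ => x ⟨0, hd⟩)
    exact (ncard_range_of_injective hinj).trans (Nat.card_zmod m)
  · rw [← (hcoord k).2]
    have hbij := ((hcoord k).1.injOn_range (g := fun x : Fin d → ℝ => x k)).bijOn_image
    rwa [← range_comp] at hbij
end
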